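/- arXiv:0902.0586 — 8 statements merged into one kernel-verified Lean document; each statement's English description precedes it below -/
import Mathlib

section
/- Assume the network is asymmetric, i.e. E_{M,D} = ℝ^n. If a vector q ∈ ℝ^N satisfies I_D Γ^k q = 0 for every k ∈ ℕ, then q = 0. -/
/-!
Transposing the control problem, `v ⬝ᵥ M ^ k *ᵥ eⱼ` is the `j`-th entry of `v ᵥ* M ^ k`. The
unobservable subspace `U = ⋂ₖ ker (I_D Γ ^ k)` is `Γ`-invariant and killed by `I_D`, and since
`Γ` and `I_D` are symmetric, `v ᵥ* M = (-(Γ *ᵥ b), a - I_D *ᵥ b)` for `v = (a, b)`. Hence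
`U × U` is invariant under `v ↦ v ᵥ* M`, so for `q ∈ U` every `(q, 0) ᵥ* M ^ k` has its velocity
block in `ker I_D`, i.e. vanishing entries on `D`. Thus `(q, 0)` is orthogonal to all the
generators of `E_{M,D} = ℝⁿ`, and `q = 0`.
-/

open Matrix

namespace Matrix

variable {n R : Type*} [Fintype n]

section CommSemiring

variable [CommSemiring R]

theorem eq_zero_of_forall_dotProduct_eq_zero_of_span_eq_top {s : Set (n → R)}
    (hs : Submodule.span R s = ⊤) {v : n → R} (h : ∀ w ∈ s, v ⬝ᵥ w = 0) : v = 0 :=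
  dotProduct_eq_zero v fun w =>
    LinearMap.congr_fun (LinearMap.ext_on hs (f := dotProductBilin R R v) (g := 0) h) w

theorem IsSymm.vecMul_eq_mulVec {B : Matrix n n R} (hB : B.IsSymm) (x : n → R) :
    x ᵥ* B = B *ᵥ x := by
  rw [← vecMul_transpose, hB.eq]

variable [DecidableEq n]

/-- The largest `A`-invariant subspace of `ker C`. -/
def unobservableSubspace (C A : Matrix n n R) : Submodule R (n → R) :=
  ⨅ k : ℕ, LinearMap.ker (C * A ^ k).mulVecLin

variable {C A : Matrix n n R} {y : n → R}

theorem mem_unobservableSubspace :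
    y ∈ unobservableSubspace C A ↔ ∀ k : ℕ, (C * A ^ k) *ᵥ y = 0 := by
  simp [unobservableSubspace]

theorem mulVec_eq_zero_of_mem_unobservableSubspace (hy : y ∈ unobservableSubspace C A) :
    C *ᵥ y = 0 := by
  simpa using mem_unobservableSubspace.1 hy 0

theorem mulVec_mem_unobservableSubspace (hy : y ∈ unobservableSubspace C A) :
    A *ᵥ y ∈ unobservableSubspace C A :=
  mem_unobservableSubspace.2 fun k => by
    rw [mulVec_mulVec, mul_assoc, ← pow_succ]
    exact mem_unobservableSubspace.1 hy (k + 1)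

end CommSemiring

variable [CommRing R] [DecidableEq n] {C A : Matrix n n R} {y : n → R}

theorem vecMul_fromBlocks_mem_unobservableSubspace (hA : A.IsSymm) (hC : C.IsSymm)
    {w : n ⊕ n → R} (hl : w ∘ Sum.inl ∈ unobservableSubspace C A)
    (hr : w ∘ Sum.inr ∈ unobservableSubspace C A) :
    (w ᵥ* fromBlocks 0 1 (-A) (-C)) ∘ Sum.inl ∈ unobservableSubspace C A ∧
      (w ᵥ* fromBlocks 0 1 (-A) (-C)) ∘ Sum.inr ∈ unobservableSubspace C A := by
  simp only [vecMul_fromBlocks, Sum.elim_comp_inl, Sum.elim_comp_inr, vecMul_zero, vecMul_one,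
    vecMul_neg, zero_add, hA.vecMul_eq_mulVec, hC.vecMul_eq_mulVec,
    mulVec_eq_zero_of_mem_unobservableSubspace hr, neg_zero, add_zero]
  exact ⟨Submodule.neg_mem _ (mulVec_mem_unobservableSubspace hr), hl⟩

theorem vecMul_pow_fromBlocks_comp_inr_mem_unobservableSubspace (hA : A.IsSymm)
    (hC : C.IsSymm) (hy : y ∈ unobservableSubspace C A) (k : ℕ) :
    (Sum.elim y 0 ᵥ* fromBlocks 0 1 (-A) (-C) ^ k) ∘ Sum.inr ∈ unobservableSubspace C A := by
  suffices ∀ k : ℕ,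
      (Sum.elim y 0 ᵥ* fromBlocks 0 1 (-A) (-C) ^ k) ∘ Sum.inl ∈ unobservableSubspace C A ∧
      (Sum.elim y 0 ᵥ* fromBlocks 0 1 (-A) (-C) ^ k) ∘ Sum.inr ∈ unobservableSubspace C A from
    (this k).2
  intro k
  induction k with
  | zero =>
    simp only [pow_zero, vecMul_one, Sum.elim_comp_inl, Sum.elim_comp_inr]
    exact ⟨hy, Submodule.zero_mem _⟩
  | succ k ih =>
    rw [pow_succ, ← vecMul_vecMul]
    exact vecMul_fromBlocks_mem_unobservableSubspace hA hC ih.1 ih.2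

end Matrix

theorem stmt0_general (N : ℕ) (G : SimpleGraph (Fin N)) [DecidableRel G.Adj]
    (D : Finset (Fin N))
    (Γ : Matrix (Fin N) (Fin N) ℝ)
    (hΓ : Γ = 1 + (Matrix.diagonal (fun i => (G.degree i : ℝ)) - G.adjMatrix ℝ))
    (ID : Matrix (Fin N) (Fin N) ℝ)
    (hID : ID = Matrix.diagonal (fun i => if i ∈ D then (1 : ℝ) else 0))
    (M : Matrix (Fin N ⊕ Fin N) (Fin N ⊕ Fin N) ℝ)
    (hM : M = Matrix.fromBlocks 0 1 (-Γ) (-ID))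
    (hasym : Submodule.span ℝ
      {v : (Fin N ⊕ Fin N) → ℝ | ∃ i ∈ D, ∃ k : ℕ, v = (M ^ k).mulVec (Pi.single (Sum.inr i) 1)}
      = ⊤)
    (q : Fin N → ℝ)
    (hq : ∀ k : ℕ, (ID * Γ ^ k).mulVec q = 0) :
    q = 0 := by
  have hΓsymm : Γ.IsSymm := hΓ ▸ isSymm_one.add ((isSymm_diagonal _).sub G.isSymm_adjMatrix)
  have hIDsymm : ID.IsSymm := hID ▸ isSymm_diagonal _
  have hqU : q ∈ unobservableSubspace ID Γ := mem_unobservableSubspace.2 hq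
  have hstate_zero : (Sum.elim q 0 : Fin N ⊕ Fin N → ℝ) = 0 := by
    refine eq_zero_of_forall_dotProduct_eq_zero_of_span_eq_top hasym ?_
    rintro _ ⟨i, hi, k, rfl⟩
    rw [dotProduct_mulVec, dotProduct_single, mul_one, hM]
    have hker := congrFun (mulVec_eq_zero_of_mem_unobservableSubspace
      (vecMul_pow_fromBlocks_comp_inr_mem_unobservableSubspace hΓsymm hIDsymm hqU k)) i
    simpa [hID, mulVec_diagonal, hi] using hker
  funext j
  simpa using congrFun hstate_zero (Sum.inl j)

/-- If the network is asymmetric (`E_{M,D} = ℝ^n`) and `I_D Γ^k q = 0` for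
every `k`, then `q = 0`. -/
theorem stmt0 (N : ℕ) (hN : 0 < N) (G : SimpleGraph (Fin N)) [DecidableRel G.Adj]
    (hG : G.Connected)
    (D : Finset (Fin N)) (hD : D.Nonempty)
    (Γ : Matrix (Fin N) (Fin N) ℝ)
    (hΓ : Γ = 1 + (Matrix.diagonal (fun i => (G.degree i : ℝ)) - G.adjMatrix ℝ))
    (ID : Matrix (Fin N) (Fin N) ℝ)
    (hID : ID = Matrix.diagonal (fun i => if i ∈ D then (1 : ℝ) else 0))
    (M : Matrix (Fin N ⊕ Fin N) (Fin N ⊕ Fin N) ℝ)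
    (hM : M = Matrix.fromBlocks 0 1 (-Γ) (-ID))
    (hasym : Submodule.span ℝ
      {v : (Fin N ⊕ Fin N) → ℝ | ∃ i ∈ D, ∃ k : ℕ, v = (M ^ k).mulVec (Pi.single (Sum.inr i) 1)}
      = ⊤)
    (q : Fin N → ℝ)
    (hq : ∀ k : ℕ, (ID * Γ ^ k).mulVec q = 0) :
    q = 0 :=
  stmt0_general N G D Γ hΓ ID hID M hM hasym q hq
end

section
/- If the network is asymmetric, i.e. E_{M,D} = ℝ^n, then the matrix M is stable: every complex eigenvalue λ of M (equivalently, every root of the characteristic polynomial of M over ℂ) satisfies Re λ < 0. -/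
/-!
If `(x, λx)` is an eigenvector of `M`, pairing `Γ x + λ I_D x + λ² x = 0` with `x̄` gives
`λ² ‖x‖² + λ ⟨x, I_D x⟩ + ⟨x, Γ x⟩ = 0`. As `Γ = I + Δ` is positive definite and `I_D` positive
semidefinite, this forces `Re λ < 0` unless `I_D x = 0`. In that undamped case `Γ x = -λ² x`, and
since `Γ` is symmetric, `(λx, x)` is a left eigenvector of `M` vanishing at the damped velocity
coordinates. It is then orthogonal to every `M^k e_{i+N}` with `i ∈ D`, hence by asymmetry to all
of `ℝⁿ`, so `x = 0`.
-/

open Matrix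
open scoped ComplexOrder MatrixOrder

/-- In `ComplexOrder`, `0 < a` says that `a` is a positive real number. -/
theorem Complex.re_neg_of_mul_sq_add_mul_add_eq_zero {a b c z : ℂ} (ha : 0 < a) (hb : 0 < b)
    (hc : 0 < c) (hz : a * z ^ 2 + b * z + c = 0) : z.re < 0 := by
  rw [Complex.pos_iff] at ha hb hc
  have hre := congrArg Complex.re hz
  have him := congrArg Complex.im hz
  simp only [Complex.add_re, Complex.add_im, Complex.mul_re, Complex.mul_im, pow_two,
    ← ha.2, ← hb.2, ← hc.2, Complex.zero_re, Complex.zero_im] at hre him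
  by_contra! hz
  rcases eq_or_ne z.im 0 with h | h
  · rw [h] at hre
    nlinarith [mul_nonneg (mul_nonneg hz hz) ha.1.le, mul_nonneg hz hb.1.le]
  · have : 2 * a.re * z.re + b.re = 0 := by
      apply (mul_eq_zero.1 (_ : z.im * (2 * a.re * z.re + b.re) = 0)).resolve_left h
      linear_combination him
    nlinarith [mul_nonneg ha.1.le hz]

namespace Matrix

section Complexification

variable {n : Type*} [Fintype n] [DecidableEq n]

theorem PosSemidef.map_ofReal {A : Matrix n n ℝ} (hA : A.PosSemidef) :
    (A.map Complex.ofReal).PosSemidef := by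
  obtain ⟨B, rfl⟩ := CStarAlgebra.nonneg_iff_eq_star_mul_self.mp hA.nonneg
  have h := Matrix.map_mul (L := star B) (M := B) (f := Complex.ofRealHom)
  rw [star_eq_conjTranspose, conjTranspose_map _ (fun _ => by simp)] at h
  exact h ▸ posSemidef_conjTranspose_mul_self _

theorem PosDef.map_ofReal {A : Matrix n n ℝ} (hA : A.PosDef) :
    (A.map Complex.ofReal).PosDef := by
  rw [hA.posSemidef.map_ofReal.posDef_iff_det_ne_zero]
  change (Complex.ofRealHom.mapMatrix A).det ≠ 0
  rw [← RingHom.map_det]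
  exact Complex.ofReal_ne_zero.2 hA.det_pos.ne'

end Complexification

theorem exists_mulVec_eq_smul_of_isRoot_charpoly {n K : Type*} [Fintype n] [DecidableEq n]
    [Field K] {A : Matrix n n K} {μ : K} (h : A.charpoly.IsRoot μ) : ∃ v ≠ 0, A *ᵥ v = μ • v := by
  have hμ : Module.End.HasEigenvalue (toLin' A) μ := by
    rw [Module.End.hasEigenvalue_iff_mem_spectrum, spectrum_toLin']
    exact mem_spectrum_of_isRoot_charpoly h
  obtain ⟨v, hv⟩ := hμ.exists_hasEigenvector
  exact ⟨v, hv.2, by simpa using hv.apply_eq_smul⟩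

theorem dotProduct_pow_mulVec_of_vecMul_eq_smul {ι R : Type*} [Fintype ι] [DecidableEq ι]
    [CommSemiring R] {A : Matrix ι ι R} {w : ι → R} {μ : R} (hw : w ᵥ* A = μ • w)
    (b : ι → R) (k : ℕ) : w ⬝ᵥ (A ^ k *ᵥ b) = μ ^ k * (w ⬝ᵥ b) := by
  induction k with
  | zero => simp
  | succ k ih =>
    rw [pow_succ', ← mulVec_mulVec, dotProduct_mulVec, hw, smul_dotProduct, ih, smul_eq_mul,
      pow_succ', mul_assoc]

/-- The Popov–Belevitch–Hautus test for a real system `(M, b)` and a complex left eigenvector. -/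
theorem eq_zero_of_vecMul_eq_smul_of_span_eq_top {ι β : Type*} [Fintype ι] [DecidableEq ι]
    {M : Matrix ι ι ℝ} {b : β → ι → ℝ} {s : Set β}
    (hspan : Submodule.span ℝ {v | ∃ i ∈ s, ∃ k : ℕ, v = (M ^ k) *ᵥ b i} = ⊤)
    {w : ι → ℂ} {μ : ℂ} (hw : w ᵥ* M.map Complex.ofReal = μ • w)
    (hb : ∀ i ∈ s, (w ⬝ᵥ fun j => (b i j : ℂ)) = 0) : w = 0 := by
  have hpair (v : ι → ℝ) : Fintype.linearCombination ℝ w v = w ⬝ᵥ fun j => (v j : ℂ) := by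
    simp [Fintype.linearCombination_apply, dotProduct, Complex.real_smul, mul_comm]
  have hf : Fintype.linearCombination ℝ w = 0 := by
    refine LinearMap.ext_on hspan ?_
    rintro _ ⟨i, hi, k, rfl⟩
    have hmap : (fun j => ((M ^ k *ᵥ b i) j : ℂ))
        = M.map Complex.ofReal ^ k *ᵥ fun j => (b i j : ℂ) := by
      ext j
      have h := RingHom.map_mulVec Complex.ofRealHom (M ^ k) (b i) j
      rw [Matrix.map_pow] at h
      exact h
    rw [hpair, hmap, dotProduct_pow_mulVec_of_vecMul_eq_smul hw, hb i hi, mul_zero,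
      LinearMap.zero_apply]
  ext j
  simpa using LinearMap.congr_fun hf (Pi.single j 1)

section DampedOscillator

variable {n K : Type*} [DecidableEq n] [CommRing K]

/-- The first-order form of `ẍ + R ẋ + Γ x = 0`, acting on `(x, ẋ)`. -/
def dampedOscillator (Γ R : Matrix n n K) : Matrix (n ⊕ n) (n ⊕ n) K :=
  fromBlocks 0 1 (-Γ) (-R)

theorem dampedOscillator_map {L : Type*} [CommRing L] (Γ R : Matrix n n K) (f : K →+* L) :
    (dampedOscillator Γ R).map f = dampedOscillator (Γ.map f) (R.map f) := by
  simp [dampedOscillator, fromBlocks_map, Matrix.map_neg]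

variable [Fintype n]

theorem dampedOscillator_mulVec_eq_smul {Γ R : Matrix n n K} {μ : K} {x y : n → K}
    (h : dampedOscillator Γ R *ᵥ Sum.elim x y = μ • Sum.elim x y) :
    y = μ • x ∧ Γ *ᵥ x + μ • (R *ᵥ x) + μ ^ 2 • x = 0 := by
  rw [dampedOscillator, fromBlocks_mulVec] at h
  have hy : y = μ • x := funext fun i => by simpa using congrFun h (Sum.inl i)
  have hx : -(Γ *ᵥ x) - R *ᵥ y = μ • y :=
    funext fun i => by simpa [sub_eq_add_neg, neg_mulVec] using congrFun h (Sum.inr i)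
  rw [hy, mulVec_smul, smul_smul, ← sq] at hx
  exact ⟨hy, by linear_combination (norm := module) -hx⟩

theorem vecMul_dampedOscillator_eq_smul {Γ R : Matrix n n K} {μ : K} {x : n → K}
    (hΓ : x ᵥ* Γ = -(μ ^ 2) • x) (hR : x ᵥ* R = 0) :
    Sum.elim (μ • x) x ᵥ* dampedOscillator Γ R = μ • Sum.elim (μ • x) x := by
  rw [dampedOscillator, vecMul_fromBlocks]
  ext (i | i) <;> simp [vecMul_neg, hΓ, hR, sq, mul_assoc]

theorem dampedOscillator_exists_undamped_mode {Γ R : Matrix n n ℝ} (hΓ : Γ.PosDef)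
    (hR : R.PosSemidef) {μ : ℂ}
    (hμ : ((dampedOscillator Γ R).map Complex.ofReal).charpoly.IsRoot μ) (hre : 0 ≤ μ.re) :
    ∃ x ≠ 0, R.map Complex.ofReal *ᵥ x = 0 ∧
      Sum.elim (μ • x) x ᵥ* (dampedOscillator Γ R).map Complex.ofReal
        = μ • Sum.elim (μ • x) x := by
  have hΓc := hΓ.map_ofReal
  have hRc := hR.map_ofReal
  rw [show (dampedOscillator Γ R).map Complex.ofReal
      = dampedOscillator (Γ.map Complex.ofReal) (R.map Complex.ofReal)
      from dampedOscillator_map Γ R Complex.ofRealHom] at hμ ⊢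
  obtain ⟨v, hv0, hv⟩ := exists_mulVec_eq_smul_of_isRoot_charpoly hμ
  rw [← Sum.elim_comp_inl_inr v] at hv hv0
  obtain ⟨hy, hx⟩ := dampedOscillator_mulVec_eq_smul hv
  set x := v ∘ Sum.inl
  have hx0 : x ≠ 0 := by
    intro hx0
    apply hv0
    rw [hy, hx0, smul_zero]
    ext (i | i) <;> rfl
  have hquad : (star x ⬝ᵥ x) * μ ^ 2 + (star x ⬝ᵥ R.map Complex.ofReal *ᵥ x) * μ
      + star x ⬝ᵥ Γ.map Complex.ofReal *ᵥ x = 0 := by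
    have := congrArg (star x ⬝ᵥ ·) hx
    simp only [dotProduct_add, dotProduct_smul, smul_eq_mul, dotProduct_zero] at this
    linear_combination this
  have hRx : R.map Complex.ofReal *ᵥ x = 0 := by
    rw [← hRc.dotProduct_mulVec_zero_iff]
    refine ((hRc.dotProduct_mulVec_nonneg x).lt_or_eq.resolve_left fun hb => ?_).symm
    exact hre.not_gt (Complex.re_neg_of_mul_sq_add_mul_add_eq_zero
      (dotProduct_star_self_pos_iff.2 hx0) hb (hΓc.dotProduct_mulVec_pos hx0) hquad)
  have hsymm {A : Matrix n n ℝ} (hA : A.IsHermitian) (y : n → ℂ) :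
      y ᵥ* A.map Complex.ofReal = A.map Complex.ofReal *ᵥ y := by
    rw [← mulVec_transpose, ← transpose_map, ← conjTranspose_eq_transpose_of_trivial, hA.eq]
  refine ⟨x, hx0, hRx, vecMul_dampedOscillator_eq_smul ?_ ?_⟩
  · rw [hsymm hΓ.isHermitian]
    linear_combination (norm := module) hx - μ • hRx
  · rw [hsymm hR.isHermitian, hRx]

end DampedOscillator

end Matrix

theorem stmt1_general (N : ℕ) (G : SimpleGraph (Fin N)) [DecidableRel G.Adj]
    (D : Finset (Fin N))
    (Γ : Matrix (Fin N) (Fin N) ℝ)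
    (hΓ : Γ = 1 + (Matrix.diagonal (fun i => (G.degree i : ℝ)) - G.adjMatrix ℝ))
    (ID : Matrix (Fin N) (Fin N) ℝ)
    (hID : ID = Matrix.diagonal (fun i => if i ∈ D then (1 : ℝ) else 0))
    (M : Matrix (Fin N ⊕ Fin N) (Fin N ⊕ Fin N) ℝ)
    (hM : M = Matrix.fromBlocks 0 1 (-Γ) (-ID))
    (hasym : Submodule.span ℝ
      {v : (Fin N ⊕ Fin N) → ℝ | ∃ i ∈ D, ∃ k : ℕ, v = (M ^ k).mulVec (Pi.single (Sum.inr i) 1)}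
      = ⊤) :
    ∀ lam : ℂ, ((M.map (Complex.ofReal ·)).charpoly).IsRoot lam → lam.re < 0 := by
  intro lam hroot
  subst hΓ hID hM
  have hΓ : (1 + G.lapMatrix ℝ).PosDef := PosDef.one.add_posSemidef (G.posSemidef_lapMatrix ℝ)
  have hR : (diagonal fun i => if i ∈ D then (1 : ℝ) else 0).PosSemidef :=
    PosSemidef.diagonal fun i => by dsimp only; split_ifs <;> norm_num
  by_contra! hre
  obtain ⟨x, hx0, hRx, hw⟩ := dampedOscillator_exists_undamped_mode hΓ hR hroot hre
  have hxD (i : Fin N) (hi : i ∈ D) : x i = 0 := by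
    simpa [diagonal_map, mulVec_diagonal, hi] using congrFun hRx i
  have hw0 := eq_zero_of_vecMul_eq_smul_of_span_eq_top hasym hw fun i hi => by
    have hsingle : (fun j => ((Pi.single (Sum.inr i) 1 : Fin N ⊕ Fin N → ℝ) j : ℂ))
        = Pi.single (Sum.inr i) 1 := funext (Pi.apply_single (fun _ => Complex.ofReal) (by simp) _ _)
    simp [hsingle, dotProduct_single, hxD i hi]
  exact hx0 (funext fun i => congrFun hw0 (Sum.inr i))

/-- If the network is asymmetric (`E_{M,D} = ℝ^n`) then `M` is stable:
every complex root of its characteristic polynomial has strictly negative real part. -/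
theorem stmt1 (N : ℕ) (hN : 0 < N) (G : SimpleGraph (Fin N)) [DecidableRel G.Adj]
    (hG : G.Connected)
    (D : Finset (Fin N)) (hD : D.Nonempty)
    (Γ : Matrix (Fin N) (Fin N) ℝ)
    (hΓ : Γ = 1 + (Matrix.diagonal (fun i => (G.degree i : ℝ)) - G.adjMatrix ℝ))
    (ID : Matrix (Fin N) (Fin N) ℝ)
    (hID : ID = Matrix.diagonal (fun i => if i ∈ D then (1 : ℝ) else 0))
    (M : Matrix (Fin N ⊕ Fin N) (Fin N ⊕ Fin N) ℝ)
    (hM : M = Matrix.fromBlocks 0 1 (-Γ) (-ID))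
    (hasym : Submodule.span ℝ
      {v : (Fin N ⊕ Fin N) → ℝ | ∃ i ∈ D, ∃ k : ℕ, v = (M ^ k).mulVec (Pi.single (Sum.inr i) 1)}
      = ⊤) :
    ∀ lam : ℂ, ((M.map (Complex.ofReal ·)).charpoly).IsRoot lam → lam.re < 0 :=
  stmt1_general N G D Γ hΓ ID hID M hM hasym
end

section
/- If the network is not asymmetric, i.e. E_{M,D} ≠ ℝ^n, then M has a purely imaginary eigenvalue: there exists λ ∈ ℂ with Re λ = 0 (and λ ≠ 0) which is a root of the characteristic polynomial of M over ℂ. In particular M is not stable. -/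
/-!
If the Krylov space spanned by the vectors `M ^ k e_{N+i}`, `i ∈ D`, is proper, then the
`Mᵀ`-invariant subspace of vectors orthogonal to it is nonzero, so over `ℂ` it contains a left
eigenvector `v = (u, x)` of `M`. Orthogonality to the `e_{N+i}` means `x` vanishes on the damped
vertices, so the damping drops out of the eigen-equations: `u = μ x` and `x Γ = -μ² x`. Hence
`-μ²` is an eigenvalue of the positive definite matrix `Γ = I + Δ`, i.e. `μ² < 0`.
-/

open Matrix

theorem Module.End.exists_hasEigenvector_mem_of_mapsTo {K V : Type*} [Field K] [IsAlgClosed K]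
    [AddCommGroup V] [Module K V] [FiniteDimensional K V] (f : Module.End K V)
    {p : Submodule K V} (hp : p ≠ ⊥) (hfp : ∀ x ∈ p, f x ∈ p) :
    ∃ μ, ∃ v ∈ p, f.HasEigenvector μ v := by
  have : Nontrivial p := Submodule.nontrivial_iff_ne_bot.mpr hp
  obtain ⟨μ, hμ⟩ := Module.End.exists_eigenvalue (f.restrict hfp)
  obtain ⟨v, hv⟩ := hμ.exists_hasEigenvector
  exact ⟨μ, v, v.2, mem_eigenspace_iff.mpr (congrArg Subtype.val hv.apply_eq_smul),
    fun h => hv.2 (Subtype.ext h)⟩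

namespace Matrix

variable {n ι : Type*} [Fintype n] [DecidableEq n]

theorem exists_dotProduct_pow_mulVec_eq_zero_of_span_ne_top {K : Type*} [Field K]
    (A : Matrix n n K) (s : ι → n → K) (D : Set ι)
    (h : Submodule.span K {v | ∃ i ∈ D, ∃ k : ℕ, v = A ^ k *ᵥ s i} ≠ ⊤) :
    ∃ w ≠ 0, ∀ i ∈ D, ∀ k : ℕ, w ⬝ᵥ A ^ k *ᵥ s i = 0 := by
  obtain ⟨f, hf0, hf⟩ := Submodule.exists_dual_map_eq_bot_of_lt_top (lt_top_iff_ne_top.mpr h)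
    inferInstance
  have hfw : ∀ y, f y = (dotProductEquiv K n).symm f ⬝ᵥ y := fun y => by
    rw [← dotProductEquiv_apply_apply, LinearEquiv.apply_symm_apply]
  refine ⟨(dotProductEquiv K n).symm f, by simpa using hf0, fun i hi k => ?_⟩
  have hmem := Submodule.mem_map_of_mem (f := f) (Submodule.subset_span
    (s := {v | ∃ i ∈ D, ∃ k : ℕ, v = A ^ k *ᵥ s i}) ⟨i, hi, k, rfl⟩)
  rwa [hf, Submodule.mem_bot, hfw] at hmem

theorem exists_vecMul_eigenvector_of_dotProduct_pow_mulVec_eq_zero {K : Type*} [Field K]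
    [IsAlgClosed K] (A : Matrix n n K) (s : ι → n → K) (D : Set ι) {w : n → K} (hw : w ≠ 0)
    (h : ∀ i ∈ D, ∀ k : ℕ, w ⬝ᵥ A ^ k *ᵥ s i = 0) :
    ∃ μ : K, ∃ v ≠ 0, v ᵥ* A = μ • v ∧ ∀ i ∈ D, v ⬝ᵥ s i = 0 := by
  let W : Submodule K (n → K) :=
    { carrier := {w | ∀ i ∈ D, ∀ k : ℕ, w ⬝ᵥ A ^ k *ᵥ s i = 0}
      add_mem' := fun ha hb i hi k => by simp [add_dotProduct, ha i hi k, hb i hi k]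
      zero_mem' := fun i _ k => zero_dotProduct _
      smul_mem' := fun c w hw i hi k => by simp [smul_dotProduct, hw i hi k] }
  have hW : W ≠ ⊥ := (Submodule.ne_bot_iff W).mpr ⟨w, h, hw⟩
  have hAW : ∀ w ∈ W, vecMulLinear A w ∈ W := fun w hw i hi k => by
    simpa [← dotProduct_mulVec, mulVec_mulVec, ← pow_succ'] using hw i hi (k + 1)
  obtain ⟨μ, v, hvW, hv⟩ := Module.End.exists_hasEigenvector_mem_of_mapsTo (vecMulLinear A) hW hAW
  exact ⟨μ, v, hv.2, hv.apply_eq_smul, fun i hi => by simpa using hvW i hi 0⟩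

theorem exists_vecMul_map_eigenvector_of_span_ne_top {K L : Type*} [Field K] [Field L]
    [IsAlgClosed L] (f : K →+* L) (A : Matrix n n K) (s : ι → n → K) (D : Set ι)
    (h : Submodule.span K {v | ∃ i ∈ D, ∃ k : ℕ, v = A ^ k *ᵥ s i} ≠ ⊤) :
    ∃ μ : L, ∃ v ≠ 0, v ᵥ* A.map f = μ • v ∧ ∀ i ∈ D, v ⬝ᵥ (f ∘ s i) = 0 := by
  obtain ⟨w, hw, hwD⟩ := exists_dotProduct_pow_mulVec_eq_zero_of_span_ne_top A s D h
  refine exists_vecMul_eigenvector_of_dotProduct_pow_mulVec_eq_zero _ _ D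
    (w := f ∘ w) (fun h0 => hw (funext fun j => f.injective (by simpa using congrFun h0 j)))
    fun i hi k => ?_
  have hmap : (A ^ k).map f *ᵥ f ∘ s i = f ∘ (A ^ k *ᵥ s i) :=
    funext fun j => (f.map_mulVec _ _ j).symm
  rw [← Matrix.map_pow, hmap, ← f.map_dotProduct, hwD i hi k, map_zero]

open Polynomial in
theorem isRoot_charpoly_of_vecMul_eq_smul {K : Type*} [Field K] {A : Matrix n n K} {μ : K}
    {v : n → K} (hv : v ≠ 0) (h : v ᵥ* A = μ • v) : A.charpoly.IsRoot μ := by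
  rw [IsRoot, eval_charpoly]
  exact exists_vecMul_eq_zero_iff.mp ⟨v, hv, by simp [vecMul_sub, h]⟩

open Polynomial in
theorem PosDef.exists_pos_eq_of_isRoot_charpoly_map {A : Matrix n n ℝ} (hA : A.PosDef)
    {c : ℂ} (hc : (A.map Complex.ofRealHom).charpoly.IsRoot c) : ∃ t : ℝ, 0 < t ∧ c = t := by
  rw [charpoly_map, hA.isHermitian.charpoly_eq] at hc
  simp only [IsRoot, Polynomial.map_prod, Polynomial.map_sub, map_X, map_C, eval_prod, eval_sub,
    eval_X, eval_C, Finset.prod_eq_zero_iff, sub_eq_zero] at hc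
  obtain ⟨i, -, rfl⟩ := hc
  exact ⟨_, hA.eigenvalues_pos i, by simp⟩

end Matrix

theorem Complex.re_eq_zero_of_sq_eq_neg {μ : ℂ} {t : ℝ} (ht : 0 < t) (h : μ ^ 2 = -t) :
    μ.re = 0 := by
  have hre := congrArg Complex.re h
  have him := congrArg Complex.im h
  simp only [sq, Complex.mul_re, Complex.mul_im, Complex.neg_re, Complex.neg_im,
    Complex.ofReal_re, Complex.ofReal_im, neg_zero] at hre him
  rcases mul_eq_zero.mp (by linarith : μ.re * μ.im = 0) with h | h
  · exact h
  · nlinarith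

theorem re_eq_zero_and_ne_zero_of_vecMul_fromBlocks_eq_smul {n : Type*} [Fintype n]
    [DecidableEq n] {Γ C : Matrix n n ℝ} (hΓ : Γ.PosDef) {μ : ℂ} {v : n ⊕ n → ℂ} (hv : v ≠ 0)
    (h : v ᵥ* (fromBlocks 0 1 (-Γ) (-C)).map Complex.ofRealHom = μ • v)
    (hC : (v ∘ Sum.inr) ᵥ* C.map Complex.ofRealHom = 0) :
    μ.re = 0 ∧ μ ≠ 0 := by
  obtain ⟨u, x, rfl⟩ : ∃ u x, v = Sum.elim u x := ⟨_, _, (Sum.elim_comp_inl_inr v).symm⟩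
  have hsmul : μ • Sum.elim u x = Sum.elim (μ • u) (μ • x) := by ext (i | i) <;> rfl
  rw [hsmul, fromBlocks_map, vecMul_fromBlocks] at h
  have hu := congrArg (· ∘ Sum.inl) h
  have hx := congrArg (· ∘ Sum.inr) h
  simp only [Sum.elim_comp_inl, Sum.elim_comp_inr, Matrix.map_zero _ (map_zero _),
    Matrix.map_one _ (map_zero _) (map_one _), Matrix.map_neg _ (map_neg Complex.ofRealHom),
    vecMul_zero, vecMul_one, vecMul_neg, zero_add] at hu hx hC
  rw [hC, neg_zero, add_zero] at hx
  subst hx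
  have hx0 : x ≠ 0 := fun hx => hv (by simp [hx])
  have hΓx : x ᵥ* Γ.map Complex.ofRealHom = (-μ ^ 2) • x := by
    rw [← neg_neg (x ᵥ* _), hu, sq, smul_smul, neg_smul]
  obtain ⟨t, ht, hμt⟩ :=
    hΓ.exists_pos_eq_of_isRoot_charpoly_map (isRoot_charpoly_of_vecMul_eq_smul hx0 hΓx)
  have hμ2 : μ ^ 2 = -t := by rw [← hμt, neg_neg]
  refine ⟨Complex.re_eq_zero_of_sq_eq_neg ht hμ2, fun hμ => ?_⟩
  simp [hμ, ht.ne'] at hμ2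

theorem stmt2_general (N : ℕ) (G : SimpleGraph (Fin N)) [DecidableRel G.Adj]
    (D : Finset (Fin N))
    (Γ : Matrix (Fin N) (Fin N) ℝ)
    (hΓ : Γ = 1 + (Matrix.diagonal (fun i => (G.degree i : ℝ)) - G.adjMatrix ℝ))
    (ID : Matrix (Fin N) (Fin N) ℝ)
    (hID : ID = Matrix.diagonal (fun i => if i ∈ D then (1 : ℝ) else 0))
    (M : Matrix (Fin N ⊕ Fin N) (Fin N ⊕ Fin N) ℝ)
    (hM : M = Matrix.fromBlocks 0 1 (-Γ) (-ID))
    (hnotasym : Submodule.span ℝ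
      {v : (Fin N ⊕ Fin N) → ℝ | ∃ i ∈ D, ∃ k : ℕ, v = (M ^ k).mulVec (Pi.single (Sum.inr i) 1)}
      ≠ ⊤) :
    ∃ lam : ℂ, lam.re = 0 ∧ lam ≠ 0 ∧ ((M.map (Complex.ofReal ·)).charpoly).IsRoot lam := by
  have hΓpos : Γ.PosDef := by
    rw [hΓ, ← SimpleGraph.degMatrix, ← SimpleGraph.lapMatrix]
    exact PosDef.one.add_posSemidef (G.posSemidef_lapMatrix ℝ)
  obtain ⟨μ, v, hv, hvM, hvD⟩ := exists_vecMul_map_eigenvector_of_span_ne_top Complex.ofRealHom M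
    (fun i => Pi.single (Sum.inr i) 1) D hnotasym
  have hv_inr : ∀ i ∈ D, v (Sum.inr i) = 0 := fun i hi => by
    have hsingle : Complex.ofRealHom ∘ Pi.single (Sum.inr i : Fin N ⊕ Fin N) (1 : ℝ) =
        Pi.single (Sum.inr i) 1 := by
      ext j; by_cases h : j = Sum.inr i <;> simp [h]
    simpa [hsingle] using hvD i hi
  have hdamp : (v ∘ Sum.inr) ᵥ* ID.map Complex.ofRealHom = 0 := by
    ext i
    simp only [hID, diagonal_map (map_zero _), vecMul_diagonal, Function.comp_apply, Pi.zero_apply]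
    split_ifs with hi <;> simp [hv_inr i, hi]
  obtain ⟨hre, hne⟩ :=
    re_eq_zero_and_ne_zero_of_vecMul_fromBlocks_eq_smul hΓpos hv (hM ▸ hvM) hdamp
  exact ⟨μ, hre, hne, isRoot_charpoly_of_vecMul_eq_smul hv hvM⟩

/-- If the network is not asymmetric (`E_{M,D} ≠ ℝ^n`) then `M` has a
nonzero purely imaginary eigenvalue; in particular `M` is not stable. -/
theorem stmt2 (N : ℕ) (hN : 0 < N) (G : SimpleGraph (Fin N)) [DecidableRel G.Adj]
    (hG : G.Connected)
    (D : Finset (Fin N)) (hD : D.Nonempty)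
    (Γ : Matrix (Fin N) (Fin N) ℝ)
    (hΓ : Γ = 1 + (Matrix.diagonal (fun i => (G.degree i : ℝ)) - G.adjMatrix ℝ))
    (ID : Matrix (Fin N) (Fin N) ℝ)
    (hID : ID = Matrix.diagonal (fun i => if i ∈ D then (1 : ℝ) else 0))
    (M : Matrix (Fin N ⊕ Fin N) (Fin N ⊕ Fin N) ℝ)
    (hM : M = Matrix.fromBlocks 0 1 (-Γ) (-ID))
    (hnotasym : Submodule.span ℝ
      {v : (Fin N ⊕ Fin N) → ℝ | ∃ i ∈ D, ∃ k : ℕ, v = (M ^ k).mulVec (Pi.single (Sum.inr i) 1)}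
      ≠ ⊤) :
    ∃ lam : ℂ, lam.re = 0 ∧ lam ≠ 0 ∧ ((M.map (Complex.ofReal ·)).charpoly).IsRoot lam :=
  stmt2_general N G D Γ hΓ ID hID M hM hnotasym
end

section
/- If the network is asymmetric, i.e. E_{M,D} = ℝ^n, then the noise-free linear dynamics is exponentially contracting: there exist constants C ≥ 1 and α > 0 such that for every t ≥ 0 and every z ∈ ℝ^n, ‖exp(tM) z‖ ≤ C e^{−α t} ‖z‖. -/
/-!
A left eigenvector `(u, v)` of `M = [[0, I], [-Γ, -I_D]]` for the eigenvalue `μ` has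
`u = μ v + I_D v` and `(Γ + μ I_D + μ²) v = 0`. Pairing with `v` gives
`‖v‖² μ² + ⟪v, I_D v⟫ μ + ⟪v, Γ v⟫ = 0`, a quadratic with positive coefficients, so `Re μ < 0`,
unless `I_D v = 0`. In that case `(u, v)` is orthogonal to every `M^k e_{N+i}` with `i ∈ D`, and
asymmetry forces it to vanish (Hautus test). So the spectrum of `exp M` lies in the open unit
disc, Gelfand's formula makes some power `exp (m M)` a strict contraction, and `‖exp (t M)‖`
decays exponentially.
-/

open Matrix NormedSpace Set Filter
open scoped ComplexOrder

theorem Complex.re_lt_zero_of_quadratic_eq_zero {a b c z : ℂ} (ha : 0 < a) (hb : 0 < b)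
    (hc : 0 < c) (h : a * z ^ 2 + b * z + c = 0) : z.re < 0 := by
  rw [Complex.pos_iff] at ha hb hc
  have hre := congrArg Complex.re h
  have him := congrArg Complex.im h
  simp only [Complex.add_re, Complex.add_im, Complex.mul_re, Complex.mul_im, sq, ← ha.2, ← hb.2,
    ← hc.2, Complex.zero_re, Complex.zero_im] at hre him
  by_contra! hz
  rcases eq_or_ne z.im 0 with him0 | him0
  · rw [him0] at hre
    nlinarith [mul_nonneg ha.1.le (mul_nonneg hz hz), mul_nonneg hb.1.le hz]
  · have : 2 * a.re * z.re + b.re = 0 := by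
      apply mul_left_cancel₀ him0; linarith
    nlinarith [mul_nonneg ha.1.le hz]

section Hurwitz

variable {n : Type*} [Fintype n]

theorem Matrix.re_lt_zero_of_quadratic_mulVec_eq_zero {Γ R : Matrix n n ℂ} (hΓ : Γ.PosDef)
    (hR : R.PosSemidef) {v : n → ℂ} {μ : ℂ} (h : Γ *ᵥ v + μ • R *ᵥ v + μ ^ 2 • v = 0)
    (hRv : R *ᵥ v ≠ 0) : μ.re < 0 := by
  have hv : v ≠ 0 := by rintro rfl; simp at hRv
  have hb : 0 < star v ⬝ᵥ R *ᵥ v :=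
    (hR.dotProduct_mulVec_nonneg v).lt_of_ne' ((hR.dotProduct_mulVec_zero_iff v).not.mpr hRv)
  have hquad := congrArg (star v ⬝ᵥ ·) h
  simp only [dotProduct_add, dotProduct_smul, dotProduct_zero, smul_eq_mul] at hquad
  refine Complex.re_lt_zero_of_quadratic_eq_zero (dotProduct_star_self_pos_iff.mpr hv) hb
    (hΓ.dotProduct_mulVec_pos hv) ?_
  linear_combination hquad

variable [DecidableEq n]

open scoped MatrixOrder in
theorem Matrix.PosSemidef.map_ofReal_s3 {A : Matrix n n ℝ} (hA : A.PosSemidef) :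
    (A.map ((↑) : ℝ → ℂ)).PosSemidef := by
  obtain ⟨B, rfl⟩ := CStarAlgebra.nonneg_iff_eq_star_mul_self.mp hA.nonneg
  have : (star B * B).map ((↑) : ℝ → ℂ) = (B.map (↑))ᴴ * B.map (↑) := by
    ext i j
    simp [mul_apply]
  rw [this]
  exact posSemidef_conjTranspose_mul_self _

theorem Matrix.PosDef.map_ofReal_s3 {A : Matrix n n ℝ} (hA : A.PosDef) :
    (A.map ((↑) : ℝ → ℂ)).PosDef :=
  hA.posSemidef.map_ofReal_s3.posDef_iff_isUnit.mpr (hA.isUnit.map Complex.ofRealHom.mapMatrix)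

theorem Matrix.exists_vecMul_eq_smul_of_mem_spectrum {K : Type*} [Field K] {A : Matrix n n K}
    {μ : K} (hμ : μ ∈ spectrum K A) : ∃ w ≠ 0, w ᵥ* A = μ • w := by
  rw [spectrum.mem_iff, isUnit_iff_isUnit_det, isUnit_iff_ne_zero, not_not,
    ← exists_vecMul_eq_zero_iff] at hμ
  obtain ⟨w, hw0, hw⟩ := hμ
  refine ⟨w, hw0, ?_⟩
  rw [Algebra.algebraMap_eq_smul_one, vecMul_sub, vecMul_smul, vecMul_one, sub_eq_zero] at hw
  exact hw.symm

theorem Matrix.mulVec_quadratic_of_vecMul_fromBlocks_eq_smul {Γ R : Matrix n n ℂ} (hΓ : Γ.IsSymm)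
    (hR : R.IsSymm) {w : n ⊕ n → ℂ} {μ : ℂ} (hw : w ᵥ* fromBlocks 0 1 (-Γ) (-R) = μ • w) :
    Γ *ᵥ (w ∘ Sum.inr) + μ • R *ᵥ (w ∘ Sum.inr) + μ ^ 2 • (w ∘ Sum.inr) = 0 := by
  rw [vecMul_fromBlocks] at hw
  have h₁ : -(Γ *ᵥ (w ∘ Sum.inr)) = μ • (w ∘ Sum.inl) := by
    rw [← hΓ.eq, mulVec_transpose]
    simpa [vecMul_neg, Pi.smul_comp] using congrArg (· ∘ Sum.inl) hw
  have h₂ : w ∘ Sum.inl - R *ᵥ (w ∘ Sum.inr) = μ • (w ∘ Sum.inr) := by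
    rw [← hR.eq, mulVec_transpose]
    simpa [vecMul_neg, Pi.smul_comp, sub_eq_add_neg] using congrArg (· ∘ Sum.inr) hw
  linear_combination (norm := module) -h₁ - μ • h₂

theorem Matrix.eq_zero_of_vecMul_eq_smul_of_span_eq_top_s3 {ι κ : Type*} [Fintype ι]
    [DecidableEq ι] {M : Matrix ι ι ℝ} {S : Set κ} (b : κ → ι)
    (hspan : Submodule.span ℝ {v : ι → ℝ | ∃ i ∈ S, ∃ k : ℕ, v = (M ^ k) *ᵥ Pi.single (b i) 1}
      = ⊤)
    {w : ι → ℂ} {μ : ℂ} (hw : w ᵥ* M.map ((↑) : ℝ → ℂ) = μ • w) (hS : ∀ i ∈ S, w (b i) = 0) :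
    w = 0 := by
  let φ : (ι → ℝ) →ₗ[ℝ] ℂ :=
    dotProductBilin ℂ ℝ w ∘ₗ Complex.ofRealCLM.toLinearMap.compLeft ι
  have hφ (z : ι → ℝ) : φ z = w ⬝ᵥ fun j => (z j : ℂ) := rfl
  have hcoe_single (i : ι) : (fun j => ((Pi.single i 1 : ι → ℝ) j : ℂ)) = Pi.single i 1 := by
    funext j
    exact Pi.apply_single (fun _ => Complex.ofRealHom) (fun _ => map_zero _) i 1 j
  have hwk (k : ℕ) : w ᵥ* M.map ((↑) : ℝ → ℂ) ^ k = μ ^ k • w := by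
    induction k with
    | zero => simp
    | succ k ih => rw [pow_succ, ← vecMul_vecMul, ih, smul_vecMul, hw, smul_smul, pow_succ]
  have hker : φ = 0 := by
    rw [← LinearMap.ker_eq_top, eq_top_iff, ← hspan, Submodule.span_le]
    rintro _ ⟨i, hi, k, rfl⟩
    have hcoe : (fun j => (((M ^ k) *ᵥ Pi.single (b i) 1) j : ℂ)) =
        M.map ((↑) : ℝ → ℂ) ^ k *ᵥ Pi.single (b i) 1 := by
      funext j
      have := Complex.ofRealHom.map_mulVec (M ^ k) (Pi.single (b i) 1) j
      simp only [Matrix.map_pow, Complex.ofRealHom_eq_coe, Function.comp_def, hcoe_single] at this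
      exact this
    rw [SetLike.mem_coe, LinearMap.mem_ker, hφ, hcoe, dotProduct_mulVec, hwk, smul_dotProduct,
      dotProduct_single_one, hS i hi, smul_zero]
  funext j
  simpa [hφ, hcoe_single, dotProduct_single_one] using LinearMap.congr_fun hker (Pi.single j 1)

-- The generator of the damped network `ẍ = -Γ x - I_D ẋ` in the variables `(x, ẋ)`.
def Matrix.dampedOscillator_s3 (Γ : Matrix n n ℝ) (D : Finset n) : Matrix (n ⊕ n) (n ⊕ n) ℝ :=
  fromBlocks 0 1 (-Γ) (-diagonal fun i => if i ∈ D then 1 else 0)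

theorem Matrix.re_lt_zero_of_mem_spectrum_dampedOscillator {Γ : Matrix n n ℝ} (hΓ : Γ.PosDef)
    {D : Finset n}
    (hctrl : Submodule.span ℝ {v | ∃ i ∈ D, ∃ k : ℕ,
      v = (dampedOscillator_s3 Γ D ^ k) *ᵥ Pi.single (Sum.inr i) 1} = ⊤)
    {μ : ℂ} (hμ : μ ∈ spectrum ℂ ((dampedOscillator_s3 Γ D).map ((↑) : ℝ → ℂ))) : μ.re < 0 := by
  set R : Matrix n n ℝ := diagonal fun i => if i ∈ D then 1 else 0
  have hR : R.PosSemidef := PosSemidef.diagonal fun i => by dsimp; split_ifs <;> norm_num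
  obtain ⟨w, hw0, hw⟩ := exists_vecMul_eq_smul_of_mem_spectrum hμ
  have hmap : (dampedOscillator_s3 Γ D).map ((↑) : ℝ → ℂ) =
      fromBlocks 0 1 (-Γ.map (↑)) (-R.map (↑)) := by
    simp [dampedOscillator_s3, R, fromBlocks_map, Matrix.map_neg _ Complex.ofReal_neg]
  have hquad := mulVec_quadratic_of_vecMul_fromBlocks_eq_smul
    ((isHermitian_iff_isSymm.mp hΓ.isHermitian).map _)
    ((isHermitian_iff_isSymm.mp hR.isHermitian).map _) (hmap ▸ hw)
  by_cases hRv : R.map ((↑) : ℝ → ℂ) *ᵥ (w ∘ Sum.inr) = 0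
  · refine absurd (eq_zero_of_vecMul_eq_smul_of_span_eq_top_s3 (S := D) Sum.inr hctrl hw
      fun i hi => ?_) hw0
    simpa [R, mulVec_diagonal, Finset.mem_coe.mp hi] using congrFun hRv i
  · exact re_lt_zero_of_quadratic_mulVec_eq_zero hΓ.map_ofReal_s3 hR.map_ofReal_s3 hquad hRv

end Hurwitz

section SpectralMapping

variable {ι : Type*} [Fintype ι] [DecidableEq ι]

open scoped Matrix.Norms.Operator in
theorem Matrix.exp_mulVec_of_mulVec_eq_smul {A : Matrix ι ι ℂ} {x : ι → ℂ} {c : ℂ}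
    (h : A *ᵥ x = c • x) : exp A *ᵥ x = Complex.exp c • x := by
  -- every column of `X` is `x`, so `X * (c • 1) = A * X`
  let X : Matrix ι ι ℂ := of fun i _ => x i
  have hX : SemiconjBy X (algebraMap ℂ _ c) A := by
    rw [SemiconjBy, Algebra.algebraMap_eq_smul_one, Matrix.mul_smul, Matrix.mul_one]
    ext i j
    simpa [X, mul_apply, mulVec, dotProduct] using (congrFun h i).symm
  have hexp := congrFun₂ hX.exp_right
  rw [← algebraMap_exp_comm, ← Complex.exp_eq_exp_ℂ] at hexp
  rw [Algebra.algebraMap_eq_smul_one, Matrix.mul_smul, Matrix.mul_one] at hexp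
  funext i
  have hi := (hexp i i).symm
  simp only [X, mul_apply, of_apply, smul_apply, smul_eq_mul] at hi
  exact hi

theorem Matrix.spectrum_exp_subset (A : Matrix ι ι ℂ) :
    spectrum ℂ (exp A) ⊆ Complex.exp '' spectrum ℂ A := by
  intro μ hμ
  rw [← spectrum_toLin', ← Module.End.hasEigenvalue_iff_mem_spectrum] at hμ
  have hcomm : Commute (toLin' (exp A)) (toLin' A) :=
    ((Commute.refl A).exp_left).map toLinAlgEquiv'
  let E := Module.End.eigenspace (toLin' (exp A)) μ
  have hE : Set.MapsTo (toLin' A) E E := Module.End.mapsTo_genEigenspace_of_comm hcomm μ 1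
  have : Nontrivial E := Submodule.nontrivial_iff_ne_bot.mpr hμ
  obtain ⟨c, hc⟩ := Module.End.exists_eigenvalue ((toLin' A).restrict hE)
  obtain ⟨⟨x, hxE⟩, hx⟩ := hc.exists_hasEigenvector
  have hAx : A *ᵥ x = c • x := congrArg Subtype.val hx.apply_eq_smul
  have hx0 : x ≠ 0 := by simpa using hx.2
  refine ⟨c, ?_, ?_⟩
  · rw [← spectrum_toLin', ← Module.End.hasEigenvalue_iff_mem_spectrum]
    exact Module.End.hasEigenvalue_of_hasEigenvector ⟨by simpa using hAx, hx0⟩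
  · have hexp : exp A *ᵥ x = μ • x := by simpa using Module.End.mem_eigenspace_iff.mp hxE
    rw [exp_mulVec_of_mulVec_eq_smul hAx] at hexp
    exact smul_left_injective ℂ hx0 hexp

end SpectralMapping

theorem pow_floor_div_le_inv_mul_exp {q T t : ℝ} (hq0 : 0 < q) (hq1 : q < 1) :
    q ^ ⌊t / T⌋₊ ≤ q⁻¹ * Real.exp (Real.log q / T * t) := by
  have hk : t / T - 1 ≤ ⌊t / T⌋₊ := by linarith [Nat.lt_floor_add_one (t / T)]
  calc q ^ ⌊t / T⌋₊ = Real.exp (⌊t / T⌋₊ * Real.log q) := by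
        rw [Real.exp_nat_mul, Real.exp_log hq0]
    _ ≤ Real.exp ((t / T - 1) * Real.log q) :=
      Real.exp_le_exp.mpr (mul_le_mul_of_nonpos_right hk (Real.log_neg hq0 hq1).le)
    _ = q⁻¹ * Real.exp (Real.log q / T * t) := by
      rw [sub_mul, one_mul, Real.exp_sub, Real.exp_log hq0]
      field_simp

theorem exists_pow_norm_lt_one_of_spectralRadius_lt_one {A : Type*} [NormedRing A]
    [NormedAlgebra ℂ A] [CompleteSpace A] {b : A} (hb : spectralRadius ℂ b < 1) :
    ∃ m, 0 < m ∧ ‖b ^ m‖ < 1 := by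
  obtain ⟨m, hm, hm0⟩ :=
    (((spectrum.pow_nnnorm_pow_one_div_tendsto_nhds_spectralRadius b).eventually
      (gt_mem_nhds hb)).and (eventually_gt_atTop 0)).exists
  refine ⟨m, hm0, ?_⟩
  by_contra! h
  exact hm.not_ge (ENNReal.one_le_rpow (by exact_mod_cast h) (by positivity))

theorem exists_norm_exp_smul_le_of_norm_exp_lt_one {𝔸 : Type*} [NormedRing 𝔸]
    [NormedAlgebra ℝ 𝔸] [NormedAlgebra ℚ 𝔸] [CompleteSpace 𝔸] {a : 𝔸} {T : ℝ} (hT : 0 < T)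
    (ha : ‖exp (T • a)‖ < 1) :
    ∃ C α : ℝ, 0 < α ∧ ∀ t : ℝ, 0 ≤ t → ‖exp (t • a)‖ ≤ C * Real.exp (-α * t) := by
  obtain ⟨q, hq, hq1⟩ := exists_between ha
  have hq0 : 0 < q := (norm_nonneg _).trans_lt hq
  have hcont : Continuous fun s : ℝ => exp (s • a) :=
    exp_continuous.comp (continuous_id.smul continuous_const)
  obtain ⟨K, hK⟩ := isCompact_Icc.exists_bound_of_continuousOn hcont.continuousOn (s := Icc 0 T)
  have hK0 : 0 ≤ K := (norm_nonneg _).trans (hK 0 ⟨le_rfl, hT.le⟩)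
  have hperiod (k : ℕ) : ∀ s ∈ Icc 0 T, ‖exp ((s + k * T) • a)‖ ≤ K * q ^ k := by
    induction k with
    | zero => simpa using hK
    | succ k ih =>
      intro s hs
      have hsplit : (s + (k + 1 : ℕ) * T) • a = (s + k * T) • a + T • a := by
        rw [← add_smul]; push_cast; ring_nf
      rw [hsplit, NormedSpace.exp_add_of_commute (((Commute.refl a).smul_left _).smul_right _),
        pow_succ, ← mul_assoc]
      exact (norm_mul_le _ _).trans (mul_le_mul (ih s hs) hq.le (norm_nonneg _) (by positivity))
  refine ⟨K / q, -Real.log q / T, div_pos (neg_pos.mpr (Real.log_neg hq0 hq1)) hT,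
    fun t ht => ?_⟩
  have hs : t - ⌊t / T⌋₊ * T ∈ Icc 0 T := by
    have h₁ := Nat.floor_le (div_nonneg ht hT.le)
    have h₂ := Nat.lt_floor_add_one (t / T)
    rw [le_div_iff₀ hT] at h₁
    rw [div_lt_iff₀ hT] at h₂
    constructor <;> nlinarith
  calc ‖exp (t • a)‖ = ‖exp ((t - ⌊t / T⌋₊ * T + ⌊t / T⌋₊ * T) • a)‖ := by rw [sub_add_cancel]
    _ ≤ K * q ^ ⌊t / T⌋₊ := hperiod _ _ hs
    _ ≤ K * (q⁻¹ * Real.exp (Real.log q / T * t)) := by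
      gcongr
      exact pow_floor_div_le_inv_mul_exp hq0 hq1
    _ = K / q * Real.exp (-(-Real.log q / T) * t) := by ring_nf

section Decay

variable {ι : Type*} [Fintype ι] [DecidableEq ι]

open scoped Matrix.Norms.Operator

theorem Matrix.exists_norm_exp_pow_lt_one {A : Matrix ι ι ℂ}
    (hA : ∀ μ ∈ spectrum ℂ A, μ.re < 0) : ∃ m, 0 < m ∧ ‖exp A ^ m‖ < 1 := by
  refine exists_pow_norm_lt_one_of_spectralRadius_lt_one ?_
  rcases subsingleton_or_nontrivial (Matrix ι ι ℂ) with _ | _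
  · simp [spectralRadius, spectrum.of_subsingleton]
  · have := spectrum.spectralRadius_lt_of_forall_lt (exp A) (r := 1) fun z hz => by
      obtain ⟨μ, hμ, rfl⟩ := spectrum_exp_subset A hz
      rw [← NNReal.coe_lt_coe, coe_nnnorm, Complex.norm_exp]
      simpa using hA μ hμ
    simpa using this

theorem Matrix.linfty_opNorm_map_ofReal {m n : Type*} [Fintype m] [Fintype n]
    (A : Matrix m n ℝ) : ‖A.map ((↑) : ℝ → ℂ)‖ = ‖A‖ := by
  simp [linfty_opNorm_def]

theorem Matrix.norm_exp_map_ofReal_pow (A : Matrix ι ι ℝ) (m : ℕ) :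
    ‖exp (A.map ((↑) : ℝ → ℂ)) ^ m‖ = ‖exp A ^ m‖ := by
  have hexp : (exp A).map ((↑) : ℝ → ℂ) = exp (A.map (↑)) :=
    map_exp Complex.ofRealHom.mapMatrix (continuous_id.matrix_map Complex.continuous_ofReal) A
  rw [← linfty_opNorm_map_ofReal, ← hexp]
  exact congrArg norm (Matrix.map_pow (exp A) Complex.ofRealHom m).symm

end Decay

theorem stmt3_general (N : ℕ) (G : SimpleGraph (Fin N)) [DecidableRel G.Adj]
    (D : Finset (Fin N))
    (Γ : Matrix (Fin N) (Fin N) ℝ)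
    (hΓ : Γ = 1 + (Matrix.diagonal (fun i => (G.degree i : ℝ)) - G.adjMatrix ℝ))
    (ID : Matrix (Fin N) (Fin N) ℝ)
    (hID : ID = Matrix.diagonal (fun i => if i ∈ D then (1 : ℝ) else 0))
    (M : Matrix (Fin N ⊕ Fin N) (Fin N ⊕ Fin N) ℝ)
    (hM : M = Matrix.fromBlocks 0 1 (-Γ) (-ID))
    (hasym : Submodule.span ℝ
      {v : (Fin N ⊕ Fin N) → ℝ | ∃ i ∈ D, ∃ k : ℕ, v = (M ^ k).mulVec (Pi.single (Sum.inr i) 1)}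
      = ⊤) :
    ∃ C : ℝ, 1 ≤ C ∧ ∃ α : ℝ, 0 < α ∧ ∀ t : ℝ, 0 ≤ t → ∀ z : (Fin N ⊕ Fin N) → ℝ,
      ‖(NormedSpace.exp (t • M)).mulVec z‖ ≤ C * Real.exp (-α * t) * ‖z‖ := by
  open scoped Matrix.Norms.Operator in
  have hΓpos : Γ.PosDef := by
    rw [hΓ]
    exact PosDef.one.add_posSemidef (G.posSemidef_lapMatrix ℝ)
  obtain rfl : M = dampedOscillator_s3 Γ D := by rw [hM, hID]; rfl
  obtain ⟨m, hm, hexp⟩ := exists_norm_exp_pow_lt_one fun μ hμ =>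
    re_lt_zero_of_mem_spectrum_dampedOscillator hΓpos hasym hμ
  obtain ⟨C, α, hα, hC⟩ := exists_norm_exp_smul_le_of_norm_exp_lt_one
    (a := dampedOscillator_s3 Γ D) (T := m)
    (by exact_mod_cast hm)
    (by
      rw [Nat.cast_smul_eq_nsmul, NormedSpace.exp_nsmul]
      exact (norm_exp_map_ofReal_pow _ m).symm.trans_lt hexp)
  refine ⟨max C 1, le_max_right _ _, α, hα, fun t ht z => ?_⟩
  calc ‖exp (t • _) *ᵥ z‖ ≤ ‖exp (t • _)‖ * ‖z‖ := linfty_opNorm_mulVec _ _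
    _ ≤ max C 1 * Real.exp (-α * t) * ‖z‖ := by
      gcongr
      exact (hC t ht).trans (by gcongr; exact le_max_left _ _)

/-- If the network is asymmetric, the noise-free linear dynamics is
exponentially contracting: `‖exp(tM) z‖ ≤ C e^{-α t} ‖z‖` for all `t ≥ 0` and `z`. -/
theorem stmt3 (N : ℕ) (hN : 0 < N) (G : SimpleGraph (Fin N)) [DecidableRel G.Adj]
    (hG : G.Connected)
    (D : Finset (Fin N)) (hD : D.Nonempty)
    (Γ : Matrix (Fin N) (Fin N) ℝ)
    (hΓ : Γ = 1 + (Matrix.diagonal (fun i => (G.degree i : ℝ)) - G.adjMatrix ℝ))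
    (ID : Matrix (Fin N) (Fin N) ℝ)
    (hID : ID = Matrix.diagonal (fun i => if i ∈ D then (1 : ℝ) else 0))
    (M : Matrix (Fin N ⊕ Fin N) (Fin N ⊕ Fin N) ℝ)
    (hM : M = Matrix.fromBlocks 0 1 (-Γ) (-ID))
    (hasym : Submodule.span ℝ
      {v : (Fin N ⊕ Fin N) → ℝ | ∃ i ∈ D, ∃ k : ℕ, v = (M ^ k).mulVec (Pi.single (Sum.inr i) 1)}
      = ⊤) :
    ∃ C : ℝ, 1 ≤ C ∧ ∃ α : ℝ, 0 < α ∧ ∀ t : ℝ, 0 ≤ t → ∀ z : (Fin N ⊕ Fin N) → ℝ,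
      ‖(NormedSpace.exp (t • M)).mulVec z‖ ≤ C * Real.exp (-α * t) * ‖z‖ :=
  stmt3_general N G D Γ hΓ ID hID M hM hasym
end

section
/- Let α ∈ ℝ and z ∈ ℝ^N satisfy Γ z = α z and z_i = 0 for every i ∈ D. Then the quantity K(q,p) = α⟨z,q⟩² + ⟨z,p⟩² is a first integral of the damped harmonic dynamics: for every differentiable pair of curves q, p : ℝ → ℝ^N satisfying q′(t) = p(t) and p′(t) = −Γ q(t) − I_D p(t) for all t, the function t ↦ α⟨z, q(t)⟩² + ⟨z, p(t)⟩² is constant. -/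
/-!
Along a solution, `x(t) = ⟨z, q(t)⟩` and `y(t) = ⟨z, p(t)⟩` obey the undamped oscillator
`x' = y`, `y' = -α x`: symmetry of `Γ` moves it onto the eigenvector `z`, and the damping
term `⟨z, I_D p⟩` vanishes because `z` is supported off `D`. The oscillator energy
`α x² + y²` then has zero derivative.
-/

open Matrix

theorem HasDerivAt.const_dotProduct {𝕜 ι : Type*} [NontriviallyNormedField 𝕜] [Fintype ι]
    {f : 𝕜 → ι → 𝕜} {f' : ι → 𝕜} {t : 𝕜} (z : ι → 𝕜) (hf : HasDerivAt f f' t) :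
    HasDerivAt (fun t => z ⬝ᵥ f t) (z ⬝ᵥ f') t := by
  simp only [dotProduct]
  exact HasDerivAt.fun_sum fun i _ => ((hasDerivAt_pi.mp hf) i).const_mul (z i)

theorem dotProduct_mulVec_of_isSymm_of_mulVec_eq_smul {R n : Type*} [CommSemiring R] [Fintype n]
    {A : Matrix n n R} (hA : A.IsSymm) {α : R} {z : n → R} (hz : A *ᵥ z = α • z)
    (v : n → R) : z ⬝ᵥ A *ᵥ v = α * (z ⬝ᵥ v) := by
  rw [dotProduct_mulVec, ← mulVec_transpose, hA.eq, hz, smul_dotProduct, smul_eq_mul]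

theorem dotProduct_diagonal_mulVec_eq_zero {R n : Type*} [CommSemiring R] [Fintype n]
    [DecidableEq n] {d z : n → R} (hdz : ∀ i, z i * d i = 0) (v : n → R) :
    z ⬝ᵥ diagonal d *ᵥ v = 0 := by
  have hvec : z ᵥ* diagonal d = 0 := funext fun i => by rw [vecMul_diagonal, hdz, Pi.zero_apply]
  rw [dotProduct_mulVec, hvec, zero_dotProduct]

theorem oscillator_energy_eq {α : ℝ} {x y : ℝ → ℝ} (hx : ∀ t, HasDerivAt x (y t) t)
    (hy : ∀ t, HasDerivAt y (-(α * x t)) t) (t s : ℝ) :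
    α * x t ^ 2 + y t ^ 2 = α * x s ^ 2 + y s ^ 2 := by
  have hE : ∀ t, HasDerivAt (fun t => α * x t ^ 2 + y t ^ 2) 0 t := fun t =>
    ((((hx t).fun_pow 2).const_mul α).fun_add ((hy t).fun_pow 2)).congr_deriv (by ring)
  exact is_const_of_deriv_eq_zero (fun t => (hE t).differentiableAt) (fun t => (hE t).deriv) t s

theorem stmt5_general (N : ℕ) (G : SimpleGraph (Fin N)) [DecidableRel G.Adj]
    (D : Finset (Fin N))
    (Γ : Matrix (Fin N) (Fin N) ℝ)
    (hΓ : Γ = 1 + (Matrix.diagonal (fun i => (G.degree i : ℝ)) - G.adjMatrix ℝ))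
    (ID : Matrix (Fin N) (Fin N) ℝ)
    (hID : ID = Matrix.diagonal (fun i => if i ∈ D then (1 : ℝ) else 0))
    (α : ℝ) (z : Fin N → ℝ)
    (hz : Γ.mulVec z = α • z) (hzD : ∀ i ∈ D, z i = 0)
    (q p : ℝ → Fin N → ℝ)
    (hq : ∀ t : ℝ, HasDerivAt q (p t) t)
    (hp : ∀ t : ℝ, HasDerivAt p (-(Γ.mulVec (q t)) - ID.mulVec (p t)) t) :
    ∀ t s : ℝ,
      α * (z ⬝ᵥ q t) ^ 2 + (z ⬝ᵥ p t) ^ 2 = α * (z ⬝ᵥ q s) ^ 2 + (z ⬝ᵥ p s) ^ 2 := by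
  have hΓsymm : Γ.IsSymm := hΓ ▸ isSymm_one.add (G.isSymm_lapMatrix (R := ℝ))
  have hdamp : ∀ v, z ⬝ᵥ ID *ᵥ v = 0 := hID ▸ dotProduct_diagonal_mulVec_eq_zero fun i => by
    split_ifs with hi
    · rw [hzD i hi, zero_mul]
    · rw [mul_zero]
  refine oscillator_energy_eq (fun t => (hq t).const_dotProduct z) fun t => ?_
  have h := (hp t).const_dotProduct z
  rwa [dotProduct_sub, dotProduct_neg, hdamp,
    dotProduct_mulVec_of_isSymm_of_mulVec_eq_smul hΓsymm hz, sub_zero] at h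

/-- If `Γ z = α z` and `z` vanishes on the damped set, then
`K(q,p) = α⟨z,q⟩² + ⟨z,p⟩²` is a first integral of the damped harmonic dynamics. -/
theorem stmt5 (N : ℕ) (hN : 0 < N) (G : SimpleGraph (Fin N)) [DecidableRel G.Adj]
    (hG : G.Connected)
    (D : Finset (Fin N)) (hD : D.Nonempty)
    (Γ : Matrix (Fin N) (Fin N) ℝ)
    (hΓ : Γ = 1 + (Matrix.diagonal (fun i => (G.degree i : ℝ)) - G.adjMatrix ℝ))
    (ID : Matrix (Fin N) (Fin N) ℝ)
    (hID : ID = Matrix.diagonal (fun i => if i ∈ D then (1 : ℝ) else 0))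
    (α : ℝ) (z : Fin N → ℝ)
    (hz : Γ.mulVec z = α • z) (hzD : ∀ i ∈ D, z i = 0)
    (q p : ℝ → Fin N → ℝ)
    (hq : ∀ t : ℝ, HasDerivAt q (p t) t)
    (hp : ∀ t : ℝ, HasDerivAt p (-(Γ.mulVec (q t)) - ID.mulVec (p t)) t) :
    ∀ t s : ℝ,
      α * (z ⬝ᵥ q t) ^ 2 + (z ⬝ᵥ p t) ^ 2 = α * (z ⬝ᵥ q s) ^ 2 + (z ⬝ᵥ p s) ^ 2 :=
  stmt5_general N G D Γ hΓ ID hID α z hz hzD q p hq hp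
end

section
/- If the network is not asymmetric, i.e. E_{M,D} ≠ ℝ^n, then the stability condition fails: there exists a nonconstant differentiable pair of curves q, p : ℝ → ℝ^N satisfying q′(t) = p(t) and p′(t) = −Γ q(t) for all t, and p_i(t) = 0 for every i ∈ D and every t ∈ ℝ. -/
/-!
The Krylov space of `M` at the damped momentum coordinates is proper, so some `w ≠ 0` is
orthogonal to every `M ^ k e_(N+i)` with `i ∈ D`. The row-vector solution `y t = w exp(tM)` of
`y' = y M` therefore has `y_(N+i) t = ∑ₖ tᵏ/k! · w M ^ k e_(N+i) = 0` for `i ∈ D`. On such vectors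
the damping block of `M` acts trivially and, `Γ` being symmetric, the coordinates
`q = (y_(N+i))ᵢ`, `p = (y_i)ᵢ` solve `q' = p`, `p' = -Γ q`; moreover `p_i = q_i' = 0` for `i ∈ D`.
The solution is not constant: `Γ = I + Δ` is positive definite, so the only equilibrium is `0`,
whereas `y 0 = w ≠ 0`.
-/

open Matrix

theorem exists_ne_zero_forall_dotProduct_eq_zero_of_span_ne_top {K ι : Type*} [Field K]
    [Fintype ι] [DecidableEq ι] {s : Set (ι → K)} (hs : Submodule.span K s ≠ ⊤) :
    ∃ w ≠ 0, ∀ v ∈ s, w ⬝ᵥ v = 0 := by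
  obtain ⟨f, hf0, hf⟩ := Submodule.exists_dual_map_eq_bot_of_lt_top hs.lt_top inferInstance
  obtain ⟨w, rfl⟩ := (dotProductEquiv K ι).surjective f
  refine ⟨w, by simpa using hf0, fun v hv => ?_⟩
  have hwv := Submodule.mem_map_of_mem (f := dotProductEquiv K ι w) (Submodule.subset_span hv)
  rwa [hf, Submodule.mem_bot, dotProductEquiv_apply_apply] at hwv

theorem map_exp_smul_eq_zero_of_map_pow_eq_zero {𝕂 𝔸 F : Type*} [RCLike 𝕂] [NormedRing 𝔸]
    [NormedAlgebra 𝕂 𝔸] [CompleteSpace 𝔸] [NormedAddCommGroup F] [NormedSpace 𝕂 F]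
    (Φ : 𝔸 →L[𝕂] F) {a : 𝔸} (h : ∀ k, Φ (a ^ k) = 0) (t : 𝕂) :
    Φ (NormedSpace.exp (t • a)) = 0 := by
  rw [NormedSpace.exp_eq_tsum 𝕂, Φ.map_tsum (NormedSpace.expSeries_summable' (t • a))]
  simp [smul_pow, h]

namespace Matrix

section Exp

variable {𝕂 ι : Type*} [RCLike 𝕂] [Fintype ι]

noncomputable def vecMulCLM (M : Matrix ι ι 𝕂) : (ι → 𝕂) →L[𝕂] (ι → 𝕂) :=
  LinearMap.toContinuousLinearMap M.vecMulLinear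

theorem vecMulCLM_pow_apply [DecidableEq ι] (M : Matrix ι ι 𝕂) (k : ℕ) (v : ι → 𝕂) :
    (M.vecMulCLM ^ k) v = v ᵥ* M ^ k := by
  induction k generalizing v with
  | zero => simp
  | succ k ih =>
    rw [pow_succ, mul_apply_eq_comp, ih, pow_succ']
    simp [vecMulCLM, vecMul_vecMul]

noncomputable def vecMulExp (M : Matrix ι ι 𝕂) (w : ι → 𝕂) (t : 𝕂) : ι → 𝕂 :=
  NormedSpace.exp (t • M.vecMulCLM) w

theorem vecMulExp_zero (M : Matrix ι ι 𝕂) (w : ι → 𝕂) : M.vecMulExp w 0 = w := by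
  rw [vecMulExp, zero_smul 𝕂 M.vecMulCLM, NormedSpace.exp_zero, one_apply_eq_self]

theorem hasDerivAt_vecMulExp (M : Matrix ι ι 𝕂) (w : ι → 𝕂) (t : 𝕂) :
    HasDerivAt (M.vecMulExp w) (M.vecMulExp w t ᵥ* M) t :=
  (ContinuousLinearMap.apply 𝕂 (ι → 𝕂) w).hasFDerivAt.comp_hasDerivAt t
    (hasDerivAt_exp_smul_const' M.vecMulCLM t)

theorem vecMulExp_apply_eq_zero [DecidableEq ι] {M : Matrix ι ι 𝕂} {w : ι → 𝕂} {j : ι}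
    (h : ∀ k, (w ᵥ* M ^ k) j = 0) (t : 𝕂) : M.vecMulExp w t j = 0 :=
  map_exp_smul_eq_zero_of_map_pow_eq_zero
    ((ContinuousLinearMap.proj j).comp (ContinuousLinearMap.apply 𝕂 (ι → 𝕂) w))
    (a := M.vecMulCLM) (fun k => (congrFun (M.vecMulCLM_pow_apply k w) j).trans (h k)) t

end Exp

section Blocks

variable {ι R : Type*} [Fintype ι] [DecidableEq ι] [CommRing R]

theorem vecMul_fromBlocks_zero_one_neg_neg {Γ : Matrix ι ι R} (hΓ : Γ.IsSymm)
    (B : Matrix ι ι R) {x : ι ⊕ ι → R} (hx : (x ∘ Sum.inr) ᵥ* B = 0) :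
    x ᵥ* fromBlocks 0 1 (-Γ) (-B) = Sum.elim (-(Γ *ᵥ (x ∘ Sum.inr))) (x ∘ Sum.inl) := by
  rw [vecMul_fromBlocks, vecMul_neg, vecMul_neg, hx, ← vecMul_transpose, hΓ.eq]
  simp

theorem vecMul_diagonal_indicator_eq_zero {D : Finset ι} {v : ι → R} (hv : ∀ i ∈ D, v i = 0) :
    v ᵥ* diagonal (fun i => if i ∈ D then (1 : R) else 0) = 0 := by
  ext i
  by_cases hi : i ∈ D <;> simp [vecMul_diagonal, hi, hv]

end Blocks

end Matrix

namespace SimpleGraph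

variable {V : Type*} [Fintype V] [DecidableEq V] (G : SimpleGraph V) [DecidableRel G.Adj]

theorem posDef_one_add_lapMatrix : (1 + G.lapMatrix ℝ).PosDef :=
  PosDef.one.add_posSemidef (G.posSemidef_lapMatrix ℝ)

theorem isSymm_one_add_lapMatrix (R : Type*) [AddGroupWithOne R] : (1 + G.lapMatrix R).IsSymm :=
  isSymm_one.add (G.isSymm_lapMatrix R)

end SimpleGraph

theorem exists_ne_of_hasDerivAt_of_ne_zero {ι : Type*} [Fintype ι] [DecidableEq ι]
    {Γ : Matrix ι ι ℝ} (hΓ : Γ.det ≠ 0) {q p : ℝ → ι → ℝ}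
    (hq : ∀ t, HasDerivAt q (p t) t) (hp : ∀ t, HasDerivAt p (-(Γ *ᵥ q t)) t)
    (h0 : (q 0, p 0) ≠ 0) : ∃ t s, (q t, p t) ≠ (q s, p s) := by
  by_contra! hconst
  have hq_const : q = fun _ => q 0 := funext fun t => congrArg Prod.fst (hconst t 0)
  have hp_const : p = fun _ => p 0 := funext fun t => congrArg Prod.snd (hconst t 0)
  have hp0 : p 0 = 0 := (hq 0).unique (hq_const ▸ hasDerivAt_const 0 (q 0))
  have hΓq0 : -(Γ *ᵥ q 0) = 0 := (hp 0).unique (hp_const ▸ hasDerivAt_const 0 (p 0))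
  have hq0 : q 0 = 0 := eq_zero_of_mulVec_eq_zero hΓ (neg_eq_zero.mp hΓq0)
  exact h0 (by simp [hq0, hp0])

theorem stmt6_general (N : ℕ) (G : SimpleGraph (Fin N)) [DecidableRel G.Adj]
    (D : Finset (Fin N))
    (Γ : Matrix (Fin N) (Fin N) ℝ)
    (hΓ : Γ = 1 + (Matrix.diagonal (fun i => (G.degree i : ℝ)) - G.adjMatrix ℝ))
    (ID : Matrix (Fin N) (Fin N) ℝ)
    (hID : ID = Matrix.diagonal (fun i => if i ∈ D then (1 : ℝ) else 0))
    (M : Matrix (Fin N ⊕ Fin N) (Fin N ⊕ Fin N) ℝ)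
    (hM : M = Matrix.fromBlocks 0 1 (-Γ) (-ID))
    (hnotasym : Submodule.span ℝ
      {v : (Fin N ⊕ Fin N) → ℝ | ∃ i ∈ D, ∃ k : ℕ, v = (M ^ k).mulVec (Pi.single (Sum.inr i) 1)}
      ≠ ⊤) :
    ∃ q p : ℝ → Fin N → ℝ,
      (∀ t : ℝ, HasDerivAt q (p t) t) ∧
      (∀ t : ℝ, HasDerivAt p (-(Γ.mulVec (q t))) t) ∧
      (∀ i ∈ D, ∀ t : ℝ, p t i = 0) ∧
      ∃ t s : ℝ, (q t, p t) ≠ (q s, p s) := by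
  have hΓ_lap : Γ = 1 + G.lapMatrix ℝ := hΓ
  obtain ⟨w, hw0, hw⟩ := exists_ne_zero_forall_dotProduct_eq_zero_of_span_ne_top hnotasym
  set y := M.vecMulExp w
  have hyD : ∀ t, ∀ i ∈ D, y t (Sum.inr i) = 0 := fun t i hi =>
    vecMulExp_apply_eq_zero (fun k => by
      rw [← dotProduct_single_one (w ᵥ* M ^ k), ← dotProduct_mulVec]
      exact hw _ ⟨i, hi, k, rfl⟩) t
  have hy : ∀ t, HasDerivAt y (Sum.elim (-(Γ *ᵥ (y t ∘ Sum.inr))) (y t ∘ Sum.inl)) t := by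
    intro t
    rw [← vecMul_fromBlocks_zero_one_neg_neg (hΓ_lap ▸ (G.isSymm_one_add_lapMatrix ℝ)) ID
      (hID ▸ vecMul_diagonal_indicator_eq_zero (hyD t)), ← hM]
    exact hasDerivAt_vecMulExp M w t
  have hq : ∀ t, HasDerivAt (fun t => y t ∘ Sum.inr) (y t ∘ Sum.inl) t := fun t =>
    hasDerivAt_pi.2 fun i => hasDerivAt_pi.1 (hy t) (Sum.inr i)
  have hp : ∀ t, HasDerivAt (fun t => y t ∘ Sum.inl) (-(Γ *ᵥ (y t ∘ Sum.inr))) t := fun t =>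
    hasDerivAt_pi.2 fun i => hasDerivAt_pi.1 (hy t) (Sum.inl i)
  have hw_ne : (y 0 ∘ Sum.inr, y 0 ∘ Sum.inl) ≠ 0 := by
    rw [show y 0 = w from M.vecMulExp_zero w, Ne, Prod.mk_eq_zero]
    rintro ⟨hr, hl⟩
    exact hw0 (by rw [← Sum.elim_comp_inl_inr w, hl, hr, Sum.elim_zero_zero])
  refine ⟨_, _, hq, hp, fun i hi t => ?_, exists_ne_of_hasDerivAt_of_ne_zero
    (hΓ_lap ▸ G.posDef_one_add_lapMatrix.det_pos.ne') hq hp hw_ne⟩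
  have hqi_const : (fun s => y s (Sum.inr i)) = fun _ => 0 := funext fun s => hyD s i hi
  exact (hasDerivAt_pi.1 (hq t) i).unique (hqi_const ▸ hasDerivAt_const t 0)

/-- If the network is not asymmetric, the stability condition fails:
there is a nonconstant solution of the Hamiltonian flow whose momenta vanish on
all damped vertices. -/
theorem stmt6 (N : ℕ) (hN : 0 < N) (G : SimpleGraph (Fin N)) [DecidableRel G.Adj]
    (hG : G.Connected)
    (D : Finset (Fin N)) (hD : D.Nonempty)
    (Γ : Matrix (Fin N) (Fin N) ℝ)
    (hΓ : Γ = 1 + (Matrix.diagonal (fun i => (G.degree i : ℝ)) - G.adjMatrix ℝ))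
    (ID : Matrix (Fin N) (Fin N) ℝ)
    (hID : ID = Matrix.diagonal (fun i => if i ∈ D then (1 : ℝ) else 0))
    (M : Matrix (Fin N ⊕ Fin N) (Fin N ⊕ Fin N) ℝ)
    (hM : M = Matrix.fromBlocks 0 1 (-Γ) (-ID))
    (hnotasym : Submodule.span ℝ
      {v : (Fin N ⊕ Fin N) → ℝ | ∃ i ∈ D, ∃ k : ℕ, v = (M ^ k).mulVec (Pi.single (Sum.inr i) 1)}
      ≠ ⊤) :
    ∃ q p : ℝ → Fin N → ℝ,
      (∀ t : ℝ, HasDerivAt q (p t) t) ∧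
      (∀ t : ℝ, HasDerivAt p (-(Γ.mulVec (q t))) t) ∧
      (∀ i ∈ D, ∀ t : ℝ, p t i = 0) ∧
      ∃ t s : ℝ, (q t, p t) ≠ (q s, p s) :=
  stmt6_general N G D Γ hΓ ID hID M hM hnotasym
end

section
/- Non-uniqueness of infinitesimally invariant measures in the non-asymmetric harmonic case: let α > 0 and z ∈ ℝ^N, z ≠ 0, satisfy Γ z = α z and z_i = 0 for every i ∈ D, and set K(q,p) = α⟨z,q⟩² + ⟨z,p⟩². If μ is a finite Borel measure on ℝ^N × ℝ^N such that ∫ (L f) dμ = 0 for every smooth compactly supported function f : ℝ^N × ℝ^N → ℝ, then for every γ > 0 one also has ∫ (L f)(q,p) · e^{−γ K(q,p)} dμ(q,p) = 0 for every smooth compactly supported f. (Hence the normalized measures e^{−γK} μ / Z_γ are also infinitesimally invariant, so the invariant measure is not unique.) -/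
open Matrix MeasureTheory

/-- The generator of the harmonic heat conduction network:
`L f(q,p) = Σ_i p_i ∂_{q_i} f − Σ_i (Γq)_i ∂_{p_i} f − Σ_{i∈D} p_i ∂_{p_i} f
  + Σ_{i∈∂V} T_i ∂²_{p_i} f`. -/
noncomputable def harmGen {N : ℕ} (Γ : Matrix (Fin N) (Fin N) ℝ)
    (D bdry : Finset (Fin N)) (T : Fin N → ℝ)
    (f : (Fin N → ℝ) × (Fin N → ℝ) → ℝ) : (Fin N → ℝ) × (Fin N → ℝ) → ℝ :=
  fun w =>
    (∑ i : Fin N, w.2 i * fderiv ℝ f w (Pi.single i 1, 0))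
      - (∑ i : Fin N, Γ.mulVec w.1 i * fderiv ℝ f w (0, Pi.single i 1))
      - (∑ i ∈ D, w.2 i * fderiv ℝ f w (0, Pi.single i 1))
      + (∑ i ∈ bdry, T i *
          fderiv ℝ (fun v => fderiv ℝ f v (0, Pi.single i 1)) w (0, Pi.single i 1))

namespace Stmt8Aux

variable {N : ℕ}

/-- The continuous linear map `w ↦ z ⬝ᵥ w.1`. -/
noncomputable def dotFst (z : Fin N → ℝ) : ((Fin N → ℝ) × (Fin N → ℝ)) →L[ℝ] ℝ :=
  LinearMap.toContinuousLinearMap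
    { toFun := fun w => z ⬝ᵥ w.1
      map_add' := by intro a b; simp [dotProduct_add]
      map_smul' := by intro c a; simp [dotProduct_smul] }

/-- The continuous linear map `w ↦ z ⬝ᵥ w.2`. -/
noncomputable def dotSnd (z : Fin N → ℝ) : ((Fin N → ℝ) × (Fin N → ℝ)) →L[ℝ] ℝ :=
  LinearMap.toContinuousLinearMap
    { toFun := fun w => z ⬝ᵥ w.2
      map_add' := by intro a b; simp [dotProduct_add]
      map_smul' := by intro c a; simp [dotProduct_smul] }

@[simp] lemma dotFst_apply (z : Fin N → ℝ) (w : (Fin N → ℝ) × (Fin N → ℝ)) :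
    dotFst z w = z ⬝ᵥ w.1 := rfl

@[simp] lemma dotSnd_apply (z : Fin N → ℝ) (w : (Fin N → ℝ) × (Fin N → ℝ)) :
    dotSnd z w = z ⬝ᵥ w.2 := rfl

/-- `g(q,p) = exp(-γ (α ⟨z,q⟩² + ⟨z,p⟩²))`. -/
noncomputable def gaux (z : Fin N → ℝ) (α γ : ℝ) : ((Fin N → ℝ) × (Fin N → ℝ)) → ℝ :=
  fun w => Real.exp (-γ * (α * (z ⬝ᵥ w.1) ^ 2 + (z ⬝ᵥ w.2) ^ 2))

lemma gaux_contDiff (z : Fin N → ℝ) (α γ : ℝ) : ContDiff ℝ (⊤ : ℕ∞) (gaux z α γ) := by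
  have h1 : ContDiff ℝ (⊤ : ℕ∞) (fun w : (Fin N → ℝ) × (Fin N → ℝ) => z ⬝ᵥ w.1) :=
    (dotFst z).contDiff
  have h2 : ContDiff ℝ (⊤ : ℕ∞) (fun w : (Fin N → ℝ) × (Fin N → ℝ) => z ⬝ᵥ w.2) :=
    (dotSnd z).contDiff
  exact (Real.contDiff_exp.comp
    ((contDiff_const.mul ((contDiff_const.mul (h1.pow 2)).add (h2.pow 2)))))

lemma gaux_hasFDerivAt (z : Fin N → ℝ) (α γ : ℝ) (w : (Fin N → ℝ) × (Fin N → ℝ)) :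
    HasFDerivAt (gaux z α γ)
      ((gaux z α γ w) • ((-γ) • ((α * (2 * (z ⬝ᵥ w.1))) • dotFst z
        + (2 * (z ⬝ᵥ w.2)) • dotSnd z))) w := by
  have h1 : HasFDerivAt (fun w : (Fin N → ℝ) × (Fin N → ℝ) => z ⬝ᵥ w.1) (dotFst z) w :=
    (dotFst z).hasFDerivAt
  have h2 : HasFDerivAt (fun w : (Fin N → ℝ) × (Fin N → ℝ) => z ⬝ᵥ w.2) (dotSnd z) w :=
    (dotSnd z).hasFDerivAt
  have hsq1 := h1.mul h1
  have hsq2 := h2.mul h2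
  have hin := ((hsq1.const_mul α).add hsq2).const_mul (-γ)
  have := hin.exp
  convert this using 1
  · rfl
  · rfl
  · rfl
  · funext u; simp only [gaux]; congr 1; simp only [Pi.add_apply, Pi.mul_apply, Pi.pow_apply]; ring
  · unfold gaux
    ext e <;> simp <;> ring

lemma gaux_fderiv_apply (z : Fin N → ℝ) (α γ : ℝ) (w e : (Fin N → ℝ) × (Fin N → ℝ)) :
    fderiv ℝ (gaux z α γ) w e
      = gaux z α γ w * (-γ) * (α * (2 * (z ⬝ᵥ w.1)) * (z ⬝ᵥ e.1)
          + 2 * (z ⬝ᵥ w.2) * (z ⬝ᵥ e.2)) := by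
  rw [(gaux_hasFDerivAt z α γ w).fderiv]
  simp
  ring

lemma gaux_differentiable (z : Fin N → ℝ) (α γ : ℝ) :
    Differentiable ℝ (gaux z α γ) :=
  fun w => (gaux_hasFDerivAt z α γ w).differentiableAt

end Stmt8Aux

open Stmt8Aux in
/-- non-uniqueness of infinitesimally invariant measures in the
non-asymmetric harmonic case: if `Γ z = α z` with `z ≠ 0` vanishing on `D`, and `μ` is
infinitesimally invariant, then so is `e^{-γ K} μ` for every `γ > 0`, where
`K(q,p) = α⟨z,q⟩² + ⟨z,p⟩²`. -/
theorem stmt8 (N : ℕ) (hN : 0 < N) (G : SimpleGraph (Fin N)) [DecidableRel G.Adj]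
    (hG : G.Connected)
    (D bdry : Finset (Fin N)) (hD : D.Nonempty) (hbdry : bdry.Nonempty)
    (hbd : bdry ⊆ D)
    (T : Fin N → ℝ) (hT : ∀ i ∈ bdry, 0 ≤ T i)
    (Γ : Matrix (Fin N) (Fin N) ℝ)
    (hΓ : Γ = 1 + (Matrix.diagonal (fun i => (G.degree i : ℝ)) - G.adjMatrix ℝ))
    (α : ℝ) (hα : 0 < α) (z : Fin N → ℝ) (hz0 : z ≠ 0)
    (hz : Γ.mulVec z = α • z) (hzD : ∀ i ∈ D, z i = 0)
    (μ : Measure ((Fin N → ℝ) × (Fin N → ℝ))) [IsFiniteMeasure μ]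
    (hinv : ∀ f : (Fin N → ℝ) × (Fin N → ℝ) → ℝ, ContDiff ℝ (⊤ : ℕ∞) f → HasCompactSupport f →
      ∫ w, harmGen Γ D bdry T f w ∂μ = 0) :
    ∀ γ : ℝ, 0 < γ →
      ∀ f : (Fin N → ℝ) × (Fin N → ℝ) → ℝ, ContDiff ℝ (⊤ : ℕ∞) f → HasCompactSupport f →
        ∫ w, harmGen Γ D bdry T f w *
          Real.exp (-γ * (α * (z ⬝ᵥ w.1) ^ 2 + (z ⬝ᵥ w.2) ^ 2)) ∂μ = 0 := by
  intro γ hγ f hf hcf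
  classical
  set g := gaux z α γ with hg_def
  -- Γ is symmetric
  have hΓsymm : Γᵀ = Γ := by
    rw [hΓ]
    simp [Matrix.transpose_add, Matrix.transpose_sub, Matrix.diagonal_transpose,
      SimpleGraph.transpose_adjMatrix]
  -- the key dot product identity
  have hGam : ∀ q : Fin N → ℝ, Γ.mulVec q ⬝ᵥ z = α * (z ⬝ᵥ q) := by
    intro q
    rw [dotProduct_comm, dotProduct_mulVec, ← hΓsymm, vecMul_transpose, hz,
      smul_dotProduct]
    simp [smul_eq_mul]
  -- differentiability facts
  have hgd : Differentiable ℝ g := gaux_differentiable z α γ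
  have hfd : Differentiable ℝ f := hf.differentiable (by simp)
  -- product rule, applied
  have hmul : ∀ (v e : (Fin N → ℝ) × (Fin N → ℝ)),
      fderiv ℝ (fun u => f u * g u) v e = f v * fderiv ℝ g v e + g v * fderiv ℝ f v e := by
    intro v e
    rw [fderiv_fun_mul (hfd v) (hgd v)]
    simp
  -- pointwise identity: harmGen (f * g) = (harmGen f) * g
  have hpt : ∀ w, harmGen Γ D bdry T (fun u => f u * g u) w = harmGen Γ D bdry T f w * g w := by
    intro w
    have hzb : ∀ i ∈ bdry, z i = 0 := fun i hi => hzD i (hbd hi)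
    -- second order terms
    have hsecond : ∀ i ∈ bdry,
        fderiv ℝ (fun v => fderiv ℝ (fun u => f u * g u) v (0, Pi.single i 1)) w
          (0, Pi.single i 1)
        = g w * fderiv ℝ (fun v => fderiv ℝ f v (0, Pi.single i 1)) w (0, Pi.single i 1) := by
      intro i hi
      have hzi : z i = 0 := hzb i hi
      have hfun : (fun v => fderiv ℝ (fun u => f u * g u) v (0, Pi.single i 1))
          = fun v => g v * fderiv ℝ f v (0, Pi.single i 1) := by
        funext v
        rw [hmul, hg_def, gaux_fderiv_apply]
        simp [hzi]
      rw [hfun]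
      -- differentiate the product g v * (∂f v)
      have hf' : ContDiff ℝ (⊤ : ℕ∞) (fderiv ℝ f) := hf.fderiv_right (by simp)
      have hDfe : Differentiable ℝ (fun v => fderiv ℝ f v (0, Pi.single i 1)) := by
        have : ContDiff ℝ (⊤ : ℕ∞) (fun v => fderiv ℝ f v ((0 : Fin N → ℝ), Pi.single i 1)) :=
          (ContinuousLinearMap.apply ℝ ℝ
            ((0 : Fin N → ℝ), (Pi.single i 1 : Fin N → ℝ))).contDiff.comp hf'
        exact this.differentiable (by simp)
      rw [fderiv_fun_mul (hgd w) (hDfe w)]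
      have hzero : fderiv ℝ g w ((0 : Fin N → ℝ), (Pi.single i 1 : Fin N → ℝ)) = 0 := by
        rw [hg_def, gaux_fderiv_apply]
        simp [hzi]
      simp [hzero]
    -- first order coefficients
    have hq : ∀ i : Fin N, fderiv ℝ g w ((Pi.single i 1 : Fin N → ℝ), (0 : Fin N → ℝ))
        = (g w * (-γ) * (α * (2 * (z ⬝ᵥ w.1)))) * z i := by
      intro i
      rw [hg_def, gaux_fderiv_apply]
      simp
      ring
    have hp : ∀ i : Fin N, fderiv ℝ g w ((0 : Fin N → ℝ), (Pi.single i 1 : Fin N → ℝ))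
        = (g w * (-γ) * (2 * (z ⬝ᵥ w.2))) * z i := by
      intro i
      rw [hg_def, gaux_fderiv_apply]
      simp
      ring
    have E1 : ∀ i : Fin N, w.2 i * fderiv ℝ (fun u => f u * g u) w (Pi.single i 1, 0)
        = g w * (w.2 i * fderiv ℝ f w (Pi.single i 1, 0))
          + (f w * (g w * (-γ) * (α * (2 * (z ⬝ᵥ w.1))))) * (w.2 i * z i) := by
      intro i; rw [hmul, hq i]; ring
    have E2 : ∀ i : Fin N, Γ.mulVec w.1 i * fderiv ℝ (fun u => f u * g u) w (0, Pi.single i 1)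
        = g w * (Γ.mulVec w.1 i * fderiv ℝ f w (0, Pi.single i 1))
          + (f w * (g w * (-γ) * (2 * (z ⬝ᵥ w.2)))) * (Γ.mulVec w.1 i * z i) := by
      intro i; rw [hmul, hp i]; ring
    have E3 : ∀ i ∈ D, w.2 i * fderiv ℝ (fun u => f u * g u) w (0, Pi.single i 1)
        = g w * (w.2 i * fderiv ℝ f w (0, Pi.single i 1)) := by
      intro i hi; rw [hmul, hp i]; simp [hzD i hi]; ring
    have E4 : ∀ i ∈ bdry, T i *
          fderiv ℝ (fun v => fderiv ℝ (fun u => f u * g u) v (0, Pi.single i 1)) w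
            (0, Pi.single i 1)
        = g w * (T i * fderiv ℝ (fun v => fderiv ℝ f v (0, Pi.single i 1)) w
            (0, Pi.single i 1)) := by
      intro i hi; rw [hsecond i hi]; ring
    have hS1 : (∑ i : Fin N, w.2 i * z i) = z ⬝ᵥ w.2 := by
      rw [dotProduct_comm]; rfl
    have hS2 : (∑ i : Fin N, Γ.mulVec w.1 i * z i) = α * (z ⬝ᵥ w.1) := by
      rw [show (∑ i : Fin N, Γ.mulVec w.1 i * z i) = Γ.mulVec w.1 ⬝ᵥ z from rfl, hGam]
    unfold harmGen
    rw [Finset.sum_congr rfl (fun i _ => E1 i), Finset.sum_congr rfl (fun i _ => E2 i),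
      Finset.sum_congr rfl E3, Finset.sum_congr rfl E4,
      Finset.sum_add_distrib, Finset.sum_add_distrib,
      ← Finset.mul_sum, ← Finset.mul_sum, ← Finset.mul_sum, ← Finset.mul_sum,
      ← Finset.mul_sum, ← Finset.mul_sum, hS1, hS2]
    ring
  -- assemble
  have hfg : ContDiff ℝ (⊤ : ℕ∞) (fun u => f u * g u) := hf.mul (gaux_contDiff z α γ)
  have hcfg : HasCompactSupport (fun u => f u * g u) := by
    exact hcf.mul_right
  have h0 := hinv _ hfg hcfg
  have : (fun w => harmGen Γ D bdry T f w *
      Real.exp (-γ * (α * (z ⬝ᵥ w.1) ^ 2 + (z ⬝ᵥ w.2) ^ 2)))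
      = fun w => harmGen Γ D bdry T (fun u => f u * g u) w := by
    funext w
    rw [hpt w]
    rfl
  rw [this, h0]
end

section
/- Energy dissipation under the rigidity condition: assume the rigidity condition holds, namely there is a point c₀ ∈ ℝ^N × ℝ^N with H_∞(c₀) = 0 such that for every T > 0, every differentiable pair of curves q, p : [0,T] → ℝ^N satisfying q_i′ = p_i and p_i′ = −∂_{q_i}H_∞(q,p) for all i ∈ V, together with p_i(t) = 0 for every i ∈ D and every t ∈ [0,T], is constant equal to c₀. Then for every differentiable solution (q,p) : [0,∞) → ℝ^N × ℝ^N of the damped limit system q_i′ = p_i, p_i′ = −∂_{q_i}H_∞(q,p) − 1_{i∈D} p_i with initial energy H_∞(q(0),p(0)) = 1, and for every t > 0, one has ∫_0^t Σ_{i∈D} p_i(s)² ds > 0. -/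
/-- The limit Hamiltonian
`H_∞(q,p) = Σ_i ( p_i²/2 + 1_{u=v} q_i^v ) + (1/2) Σ_i Σ_{j∼i} (q_j − q_i)^u`. -/
noncomputable def limitHamiltonian {N : ℕ} (G : SimpleGraph (Fin N)) [DecidableRel G.Adj]
    (u v : ℕ) : (Fin N → ℝ) × (Fin N → ℝ) → ℝ :=
  fun w =>
    (∑ i : Fin N, (w.2 i ^ 2 / 2 + (if u = v then 1 else 0) * w.1 i ^ v))
      + (1 / 2) * ∑ i : Fin N, ∑ j ∈ G.neighborFinset i, (w.1 j - w.1 i) ^ u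

/-!
If no energy were dissipated up to time `t > 0`, the momenta on the damped set would vanish on
`[0, t]`. The damping term then drops out, so `(q, p)` solves the undamped Hamiltonian system with
`p_i = 0` on `D`, and rigidity forces it to be the constant `c₀`, whose energy is `0`, not `1`.
-/

open Set

theorem intervalIntegral_sum_sq_pos {ι : Type*} (s : Finset ι) (f : ℝ → ι → ℝ) {a b : ℝ}
    (hab : a < b) (hf : ∀ i ∈ s, ContinuousOn (fun x => f x i) (Icc a b))
    (hne : ∃ i ∈ s, ∃ x ∈ Icc a b, f x i ≠ 0) :
    0 < ∫ x in a..b, ∑ i ∈ s, f x i ^ 2 := by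
  obtain ⟨j, hj, c, hc, hfc⟩ := hne
  refine intervalIntegral.integral_pos hab ?_ (fun x _ => by positivity) ⟨c, hc, ?_⟩
  · exact continuousOn_finsetSum s fun i hi => (hf i hi).pow 2
  · calc 0 < f c j ^ 2 := by positivity
      _ ≤ ∑ i ∈ s, f c i ^ 2 := Finset.single_le_sum (fun i _ => sq_nonneg (f c i)) hj

theorem stmt14_general (N : ℕ) (D : Finset (Fin N))
    (H : (Fin N → ℝ) × (Fin N → ℝ) → ℝ)
    (c₀ : (Fin N → ℝ) × (Fin N → ℝ)) (hc₀ : H c₀ = 0)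
    (hrigid : ∀ T : ℝ, 0 < T → ∀ q p : ℝ → Fin N → ℝ,
      (∀ t ∈ Set.Icc (0 : ℝ) T, ∀ i : Fin N, HasDerivAt (fun s => q s i) (p t i) t) →
      (∀ t ∈ Set.Icc (0 : ℝ) T, ∀ i : Fin N,
        HasDerivAt (fun s => p s i) (-(fderiv ℝ H (q t, p t) (Pi.single i 1, 0))) t) →
      (∀ i ∈ D, ∀ t ∈ Set.Icc (0 : ℝ) T, p t i = 0) →
      ∀ t ∈ Set.Icc (0 : ℝ) T, (q t, p t) = c₀)
    (q p : ℝ → Fin N → ℝ)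
    (hq : ∀ t ∈ Set.Ici (0 : ℝ), ∀ i : Fin N, HasDerivAt (fun s => q s i) (p t i) t)
    (hp : ∀ t ∈ Set.Ici (0 : ℝ), ∀ i : Fin N,
      HasDerivAt (fun s => p s i)
        (-(fderiv ℝ H (q t, p t) (Pi.single i 1, 0)) - (if i ∈ D then 1 else 0) * p t i) t)
    (hinit : H (q 0, p 0) = 1) :
    ∀ t : ℝ, 0 < t → 0 < ∫ s in (0 : ℝ)..t, ∑ i ∈ D, p s i ^ 2 := by
  intro t ht
  by_contra! hle
  have hpD : ∀ i ∈ D, ∀ s ∈ Icc 0 t, p s i = 0 := by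
    by_contra! hne
    refine hle.not_gt (intervalIntegral_sum_sq_pos D p ht (fun i _ s hs => ?_) hne)
    exact (hp s hs.1 i).continuousAt.continuousWithinAt
  have hundamped : ∀ s ∈ Icc 0 t, ∀ i,
      HasDerivAt (fun r => p r i) (-(fderiv ℝ H (q s, p s) (Pi.single i 1, 0))) s := by
    intro s hs i
    convert hp s hs.1 i using 1
    by_cases hi : i ∈ D <;> simp [hi, hpD i _ s hs]
  have hconst := hrigid t ht q p (fun s hs i => hq s hs.1 i) hundamped hpD 0 ⟨le_rfl, ht.le⟩
  rw [hconst, hc₀] at hinit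
  exact zero_ne_one hinit

/-- energy dissipation under the rigidity condition: if every solution of
the limit Hamiltonian flow with momenta vanishing on the damped set is constant equal to
the minimizer `c₀` (with `H_∞(c₀) = 0`), then every solution of the damped limit system
with initial energy `1` dissipates: `∫_0^t Σ_{i∈D} p_i(s)² ds > 0` for every `t > 0`. -/
theorem stmt14 (N : ℕ) (hN : 0 < N) (G : SimpleGraph (Fin N)) [DecidableRel G.Adj]
    (hG : G.Connected)
    (D : Finset (Fin N)) (hD : D.Nonempty)
    (u v : ℕ) (hu : Even u) (hv : Even v) (hv2 : 2 ≤ v) (huv : v ≤ u)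
    (H : (Fin N → ℝ) × (Fin N → ℝ) → ℝ) (hH : H = limitHamiltonian G u v)
    (c₀ : (Fin N → ℝ) × (Fin N → ℝ)) (hc₀ : H c₀ = 0)
    (hrigid : ∀ T : ℝ, 0 < T → ∀ q p : ℝ → Fin N → ℝ,
      (∀ t ∈ Set.Icc (0 : ℝ) T, ∀ i : Fin N, HasDerivAt (fun s => q s i) (p t i) t) →
      (∀ t ∈ Set.Icc (0 : ℝ) T, ∀ i : Fin N,
        HasDerivAt (fun s => p s i) (-(fderiv ℝ H (q t, p t) (Pi.single i 1, 0))) t) →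
      (∀ i ∈ D, ∀ t ∈ Set.Icc (0 : ℝ) T, p t i = 0) →
      ∀ t ∈ Set.Icc (0 : ℝ) T, (q t, p t) = c₀)
    (q p : ℝ → Fin N → ℝ)
    (hq : ∀ t ∈ Set.Ici (0 : ℝ), ∀ i : Fin N, HasDerivAt (fun s => q s i) (p t i) t)
    (hp : ∀ t ∈ Set.Ici (0 : ℝ), ∀ i : Fin N,
      HasDerivAt (fun s => p s i)
        (-(fderiv ℝ H (q t, p t) (Pi.single i 1, 0)) - (if i ∈ D then 1 else 0) * p t i) t)
    (hinit : H (q 0, p 0) = 1) :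
    ∀ t : ℝ, 0 < t → 0 < ∫ s in (0 : ℝ)..t, ∑ i ∈ D, p s i ^ 2 :=
  stmt14_general N D H c₀ hc₀ hrigid q p hq hp hinit
end
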